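/- arXiv:2206.00353 — 6 statements merged into one kernel-verified Lean document; each statement's English description precedes it below -/
import Mathlib

section
/- Let $(X,\mathcal{B},\mu,f,T_f)$ be a composition dynamical system on $L^p(X)$, $1\le p<\infty$. Then $T_f$ is positively expansive (i.e., $\sup_{n\in\mathbb{N}}\|T_f^n\varphi\|_p=\infty$ for every nonzero $\varphi\in L^p(X)$) if and only if for every measurable set $B$ with $\mu(B)>0$ one has $\sup_{n\in\mathbb{N}}\mu(f^{-n}(B))=\infty$. -/
/-! For measurable `B`, `‖1_B ∘ fⁿ‖_p = μ(f⁻ⁿ B)^{1/p}`; this gives the forward direction, the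
case `μ B = ∞` being trivial already at `n = 0`. Conversely, a nonzero `φ` satisfies `‖φ‖ₑ ≥ ε > 0`
on a measurable set `B` of positive measure, so `‖φ ∘ fⁿ‖_p ≥ ε μ(f⁻ⁿ B)^{1/p}` for all `n`. -/

open MeasureTheory Filter Set ENNReal

lemma ENNReal.iSup_rpow_eq_top_iff {ι : Sort*} {r : ℝ} (hr : 0 < r) (a : ι → ℝ≥0∞) :
    (⨆ i, a i ^ r) = ⊤ ↔ (⨆ i, a i) = ⊤ := by
  have hmap : (⨆ i, a i) ^ r = ⨆ i, a i ^ r := (orderIsoRpow r hr).map_iSup a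
  rw [← hmap, rpow_eq_top_iff_of_pos hr]

section

variable {α β E : Type*} [MeasurableSpace α] [MeasurableSpace β] {μ : Measure α} {p : ℝ≥0∞}

lemma mul_measure_rpow_le_eLpNorm_of_le_enorm [ENorm E] {g : α → E} {S : Set α} {ε : ℝ≥0∞}
    (hS : MeasurableSet S) (hp0 : p ≠ 0) (hpT : p ≠ ⊤) (hg : ∀ x ∈ S, ε ≤ ‖g x‖ₑ) :
    ε * μ S ^ (1 / p.toReal) ≤ eLpNorm g p μ :=
  calc ε * μ S ^ (1 / p.toReal) = eLpNorm (S.indicator fun _ ↦ ε) p μ := by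
        rw [eLpNorm_indicator_const hS hp0 hpT, enorm_eq_self]
    _ ≤ eLpNorm g p μ := eLpNorm_mono_enorm fun x ↦ by
        by_cases hx : x ∈ S <;> simp [hx, hg]

lemma eLpNorm_indicator_const_comp [NormedAddCommGroup E] {B : Set β} {g : α → β} (c : E)
    (hB : MeasurableSet B) (hg : Measurable g) (hp0 : p ≠ 0) (hpT : p ≠ ⊤) :
    eLpNorm ((B.indicator fun _ ↦ c) ∘ g) p μ = ‖c‖ₑ * μ (g ⁻¹' B) ^ (1 / p.toReal) := by
  change eLpNorm ((g ⁻¹' B).indicator fun _ ↦ c) p μ = _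
  exact eLpNorm_indicator_const (hg hB) hp0 hpT

lemma exists_measurableSet_pos_measure_le_enorm [NormedAddCommGroup E] {φ : α → E}
    (hφ : AEStronglyMeasurable φ μ) (hφ0 : ¬ φ =ᵐ[μ] 0) :
    ∃ (B : Set α) (ε : ℝ≥0∞), MeasurableSet B ∧ 0 < μ B ∧ ε ≠ 0 ∧ ∀ x ∈ B, ε ≤ ‖φ x‖ₑ := by
  have hsupp : μ {x | φ x ≠ 0} ≠ 0 := fun h ↦ hφ0 (ae_iff.2 h)
  have hcover : {x | φ x ≠ 0} ⊆ ⋃ n : ℕ, {x | (n : ℝ≥0∞)⁻¹ ≤ ‖φ x‖ₑ} := fun x hx ↦ by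
    obtain ⟨n, hn⟩ := exists_inv_nat_lt (enorm_ne_zero.2 hx)
    exact mem_iUnion.2 ⟨n, hn.le⟩
  obtain ⟨n, hn⟩ : ∃ n : ℕ, μ {x | (n : ℝ≥0∞)⁻¹ ≤ ‖φ x‖ₑ} ≠ 0 := by
    by_contra! h
    exact hsupp (measure_mono_null hcover (measure_iUnion_null h))
  obtain ⟨B, hBsub, hB, hBeq⟩ :=
    (nullMeasurableSet_le aemeasurable_const hφ.enorm).exists_measurable_subset_ae_eq
  exact ⟨B, _, hB, (measure_congr hBeq).trans_ne hn |>.bot_lt,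
    ENNReal.inv_ne_zero.2 (natCast_ne_top n), hBsub⟩

end

theorem stmt_1_general
    {X : Type*} [MeasurableSpace X] (μ : Measure X)
    (p : ℝ≥0∞) (hp1 : 1 ≤ p) (hpT : p ≠ ⊤)
    (f : X → X) (hf_meas : Measurable f) :
    (∀ φ : X → ℂ, MemLp φ p μ → ¬ φ =ᵐ[μ] 0 →
        (⨆ n : ℕ, eLpNorm (φ ∘ (f^[n])) p μ) = ⊤) ↔
    (∀ B : Set X, MeasurableSet B → 0 < μ B →
        (⨆ n : ℕ, μ ((f^[n]) ⁻¹' B)) = ⊤) := by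
  have hp0 : p ≠ 0 := (one_pos.trans_le hp1).ne'
  have hr : 0 < 1 / p.toReal := one_div_pos.2 (toReal_pos hp0 hpT)
  constructor
  · intro H B hB hμB
    by_contra hfin
    have hBfin : μ B ≠ ⊤ := ne_top_of_le_ne_top hfin (le_iSup (fun n ↦ μ (f^[n] ⁻¹' B)) 0)
    have hind : ¬ (B.indicator fun _ ↦ (1 : ℂ)) =ᵐ[μ] 0 := by
      rwa [indicator_ae_eq_zero, Function.support_const one_ne_zero, inter_univ, ← ne_eq,
        ← pos_iff_ne_zero]
    have hexp := H _ (memLp_indicator_const p hB 1 (Or.inr hBfin)) hind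
    simp_rw [eLpNorm_indicator_const_comp _ hB (hf_meas.iterate _) hp0 hpT, enorm_one,
      one_mul] at hexp
    exact hfin ((iSup_rpow_eq_top_iff hr _).1 hexp)
  · intro H φ hφ hφ0
    obtain ⟨B, ε, hB, hμB, hε, hεφ⟩ := exists_measurableSet_pos_measure_le_enorm hφ.1 hφ0
    refine top_le_iff.1 ?_
    calc ⊤ = ε * ⨆ n : ℕ, μ (f^[n] ⁻¹' B) ^ (1 / p.toReal) := by
          rw [(iSup_rpow_eq_top_iff hr _).2 (H B hB hμB), mul_top hε]
      _ = ⨆ n : ℕ, ε * μ (f^[n] ⁻¹' B) ^ (1 / p.toReal) := mul_iSup _ _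
      _ ≤ ⨆ n : ℕ, eLpNorm (φ ∘ f^[n]) p μ := iSup_mono fun n ↦
          mul_measure_rpow_le_eLpNorm_of_le_enorm (hf_meas.iterate n hB) hp0 hpT
            fun x hx ↦ hεφ _ hx

/-- Theorem E(1): `T_f` is positively expansive iff `sup_{n∈ℕ} μ(f⁻ⁿ(B)) = ∞`
for every measurable set `B` of positive measure. -/
theorem stmt_1
    {X : Type*} [MeasurableSpace X] (μ : Measure X) [SigmaFinite μ]
    (p : ℝ≥0∞) (hp1 : 1 ≤ p) (hpT : p ≠ ⊤)
    (f : X → X) (hf_inj : Function.Injective f) (hf_meas : Measurable f)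
    (hf_bi : ∀ B : Set X, MeasurableSet B → MeasurableSet (f '' B))
    (c : ℝ≥0∞) (hc : 0 < c) (hcT : c ≠ ⊤)
    (hb : ∀ B : Set X, MeasurableSet B → μ (f ⁻¹' B) ≤ c * μ B) :
    (∀ φ : X → ℂ, MemLp φ p μ → ¬ φ =ᵐ[μ] 0 →
        (⨆ n : ℕ, eLpNorm (φ ∘ (f^[n])) p μ) = ⊤) ↔
    (∀ B : Set X, MeasurableSet B → 0 < μ B →
        (⨆ n : ℕ, μ ((f^[n]) ⁻¹' B)) = ⊤) :=
  stmt_1_general μ p hp1 hpT f hf_meas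
end

section
/- Let $(X,\mathcal{B},\mu,f,T_f)$ be a composition dynamical system on $L^p(X)$, $1\le p<\infty$. Then $T_f$ is uniformly positively expansive (i.e., $\lim_{n\to\infty}\|T_f^n\varphi\|_p=\infty$ uniformly on the unit sphere of $L^p(X)$) if and only if $\mu(f^{-n}(B))/\mu(B)\to\infty$ as $n\to\infty$ uniformly with respect to $B\in\mathcal{B}^+=\{B\in\mathcal{B}:0<\mu(B)<\infty\}$. -/
/-!
For a quasi-measure-preserving `g`, testing the bound `M ≤ ‖φ ∘ g‖_p` on normalised indicators of
sets of finite positive measure shows that it is equivalent to the inequality of measures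
`M ^ p • μ ≤ g_* μ`, which for σ-finite `μ` only has to be checked on such sets. Conversely, that
inequality gives `‖φ ∘ g‖_p ^ p = ∫ ‖φ‖ ^ p d(g_* μ) ≥ M ^ p ‖φ‖_p ^ p`. Applying this to
`g = f^[n]`, and using that `M ↦ M ^ p` is a bijection of `[0, ∞)`, the two uniform conditions
coincide.
-/

open MeasureTheory Set ENNReal

section Measures

variable {X Y : Type*} [MeasurableSpace X] [MeasurableSpace Y]

theorem MeasureTheory.Measure.smul_le_of_forall_measure_ne_top {μ ν : Measure X} [SigmaFinite μ]
    {c : ℝ≥0∞} (h : ∀ s, MeasurableSet s → μ s ≠ ∞ → c * μ s ≤ ν s) : c • μ ≤ ν := by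
  refine Measure.le_iff.mpr fun s hs => ?_
  rw [Measure.smul_apply, smul_eq_mul, ← Measure.iSup_restrict_spanningSets_of_measurableSet hs,
    ENNReal.mul_iSup]
  refine iSup_le fun i => ?_
  rw [Measure.restrict_apply hs]
  calc c * μ (s ∩ spanningSets μ i)
      ≤ ν (s ∩ spanningSets μ i) :=
        h _ (hs.inter (measurableSet_spanningSets μ i))
          ((measure_mono inter_subset_right).trans_lt (measure_spanningSets_lt_top μ i)).ne
    _ ≤ ν s := measure_mono inter_subset_left

theorem MeasureTheory.Measure.smul_le_map_iff {μ : Measure X} {ν : Measure Y} [SigmaFinite ν]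
    {g : X → Y} (hg : Measurable g) {c : ℝ≥0∞} :
    c • ν ≤ μ.map g ↔
      ∀ B, MeasurableSet B → 0 < ν B → ν B ≠ ∞ → c * ν B ≤ μ (g ⁻¹' B) := by
  refine ⟨fun h B hB _ _ => ?_, fun h => Measure.smul_le_of_forall_measure_ne_top fun B hB hBT => ?_⟩
  · simpa [Measure.map_apply hg hB] using h B
  · rw [Measure.map_apply hg hB]
    rcases eq_zero_or_pos (ν B) with hB0 | hB0
    · simp [hB0]
    · exact h B hB hB0 hBT

theorem MeasureTheory.Measure.quasiMeasurePreserving_of_le_mul {μ : Measure X} {f : X → X}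
    (hf : Measurable f) {c : ℝ≥0∞} (hb : ∀ B, MeasurableSet B → μ (f ⁻¹' B) ≤ c * μ B) :
    Measure.QuasiMeasurePreserving f μ μ :=
  ⟨hf, Measure.AbsolutelyContinuous.mk fun B hB hB0 =>
    nonpos_iff_eq_zero.mp (by simpa [Measure.map_apply hf hB, hB0] using hb B hB)⟩

end Measures

section Composition

variable {X Y E : Type*} [MeasurableSpace X] [MeasurableSpace Y] [NormedAddCommGroup E]
  {μ : Measure X} {ν : Measure Y} {g : X → Y} {p : ℝ≥0∞}

theorem rpow_mul_eLpNorm_le_eLpNorm_comp (hg : Measure.QuasiMeasurePreserving g μ ν)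
    (hp : p ≠ ∞) {c : ℝ≥0∞} (h : c • ν ≤ μ.map g) {φ : Y → E} (hφ : AEStronglyMeasurable φ ν) :
    c ^ (1 / p.toReal) * eLpNorm φ p ν ≤ eLpNorm (φ ∘ g) p μ :=
  calc c ^ (1 / p.toReal) * eLpNorm φ p ν = eLpNorm φ p (c • ν) := by
        rw [eLpNorm_smul_measure_of_ne_top hp, one_div, one_div, toReal_inv, smul_eq_mul]
    _ ≤ eLpNorm φ p (μ.map g) := eLpNorm_mono_measure φ h
    _ = eLpNorm (φ ∘ g) p μ :=
        eLpNorm_map_measure (hφ.mono_ac hg.absolutelyContinuous) hg.aemeasurable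

theorem rpow_mul_le_measure_preimage_of_le_eLpNorm_comp [NormedSpace ℝ E] [Nontrivial E]
    (hg : Measurable g) (hp0 : p ≠ 0) (hp : p ≠ ∞) {M : ℝ≥0∞}
    (h : ∀ φ : Y → E, MemLp φ p ν → eLpNorm φ p ν = 1 → M ≤ eLpNorm (φ ∘ g) p μ)
    {B : Set Y} (hB : MeasurableSet B) (hB0 : 0 < ν B) (hBT : ν B ≠ ∞) :
    M ^ p.toReal * ν B ≤ μ (g ⁻¹' B) := by
  have hr : 0 < p.toReal := toReal_pos hp0 hp
  set t := ν B ^ (1 / p.toReal)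
  have ht0 : t ≠ 0 := (rpow_pos hB0 hBT).ne'
  have htT : t ≠ ∞ := rpow_ne_top_of_nonneg (by positivity) hBT
  obtain ⟨a, ha⟩ := exists_norm_eq E (toReal_nonneg (a := t⁻¹))
  have ha : ‖a‖ₑ = t⁻¹ := by
    rw [← ofReal_norm, ha, ofReal_toReal (inv_ne_top.mpr ht0)]
  have hcomp : B.indicator (fun _ => a) ∘ g = (g ⁻¹' B).indicator fun _ => a :=
    rfl
  have key := h (B.indicator fun _ => a) (memLp_indicator_const p hB a (Or.inr hBT))
    (by rw [eLpNorm_indicator_const hB hp0 hp, ha, ENNReal.inv_mul_cancel ht0 htT])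
  rw [hcomp, eLpNorm_indicator_const (hg hB) hp0 hp, ha] at key
  have key' : M * t ≤ μ (g ⁻¹' B) ^ (1 / p.toReal) :=
    calc M * t ≤ t⁻¹ * μ (g ⁻¹' B) ^ (1 / p.toReal) * t := mul_le_mul_left key t
      _ = μ (g ⁻¹' B) ^ (1 / p.toReal) := by
        rw [mul_comm t⁻¹, mul_assoc, ENNReal.inv_mul_cancel ht0 htT, mul_one]
  simpa [t, ENNReal.mul_rpow_of_nonneg _ _ hr.le, ← ENNReal.rpow_mul, hr.ne'] using
    ENNReal.rpow_le_rpow key' hr.le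

theorem forall_le_eLpNorm_comp_iff_rpow_smul_le_map [NormedSpace ℝ E] [Nontrivial E]
    [SigmaFinite ν] (hg : Measure.QuasiMeasurePreserving g μ ν) (hp0 : p ≠ 0) (hp : p ≠ ∞)
    (M : ℝ≥0∞) :
    (∀ φ : Y → E, MemLp φ p ν → eLpNorm φ p ν = 1 → M ≤ eLpNorm (φ ∘ g) p μ) ↔
      M ^ p.toReal • ν ≤ μ.map g := by
  have hr : 0 < p.toReal := toReal_pos hp0 hp
  refine ⟨fun h => (Measure.smul_le_map_iff hg.measurable).mpr fun B hB hB0 hBT =>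
    rpow_mul_le_measure_preimage_of_le_eLpNorm_comp hg.measurable hp0 hp h hB hB0 hBT,
    fun h φ hφ hφ1 => ?_⟩
  simpa [hφ1, ← ENNReal.rpow_mul, hr.ne'] using
    rpow_mul_eLpNorm_le_eLpNorm_comp hg hp h hφ.aestronglyMeasurable

end Composition

theorem ENNReal.forall_ne_top_rpow_iff {r : ℝ} (hr : 0 < r) {P : ℝ≥0∞ → Prop} :
    (∀ M ≠ ∞, P (M ^ r)) ↔ ∀ M ≠ ∞, P M := by
  refine ⟨fun h M hM => ?_, fun h M hM => h _ (rpow_ne_top_of_nonneg hr.le hM)⟩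
  simpa [← ENNReal.rpow_mul, hr.ne'] using
    h (M ^ (1 / r)) (rpow_ne_top_of_nonneg (by positivity) hM)

theorem stmt_3_general
    {X : Type*} [MeasurableSpace X] (μ : Measure X) [SigmaFinite μ]
    (p : ℝ≥0∞) (hp1 : 1 ≤ p) (hpT : p ≠ ⊤)
    (f : X → X) (hf_meas : Measurable f)
    (c : ℝ≥0∞)
    (hb : ∀ B : Set X, MeasurableSet B → μ (f ⁻¹' B) ≤ c * μ B) :
    (∀ M : ℝ≥0∞, M ≠ ⊤ → ∃ N : ℕ, ∀ n ≥ N, ∀ φ : X → ℂ,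
        MemLp φ p μ → eLpNorm φ p μ = 1 →
        M ≤ eLpNorm (φ ∘ (f^[n])) p μ) ↔
    (∀ M : ℝ≥0∞, M ≠ ⊤ → ∃ N : ℕ, ∀ n ≥ N, ∀ B : Set X,
        MeasurableSet B → 0 < μ B → μ B ≠ ⊤ →
        M * μ B ≤ μ ((f^[n]) ⁻¹' B)) := by
  have hp0 : p ≠ 0 := (zero_lt_one.trans_le hp1).ne'
  have hf := Measure.quasiMeasurePreserving_of_le_mul hf_meas hb
  calc _ ↔ ∀ M ≠ ∞, ∃ N : ℕ, ∀ n ≥ N, M ^ p.toReal • μ ≤ μ.map (f^[n]) := by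
        simp only [forall_le_eLpNorm_comp_iff_rpow_smul_le_map (hf.iterate _) hp0 hpT]
    _ ↔ ∀ M ≠ ∞, ∃ N : ℕ, ∀ n ≥ N, M • μ ≤ μ.map (f^[n]) :=
        ENNReal.forall_ne_top_rpow_iff (P := fun M => ∃ N : ℕ, ∀ n ≥ N, M • μ ≤ μ.map (f^[n]))
          (toReal_pos hp0 hpT)
    _ ↔ _ := by
        simp only [Measure.smul_le_map_iff (hf_meas.iterate _)]

/-- Theorem E(3): `T_f` is uniformly positively expansive iff
`μ(f⁻ⁿ(B))/μ(B) → ∞` uniformly with respect to `B ∈ 𝓑⁺`. -/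
theorem stmt_3
    {X : Type*} [MeasurableSpace X] (μ : Measure X) [SigmaFinite μ]
    (p : ℝ≥0∞) (hp1 : 1 ≤ p) (hpT : p ≠ ⊤)
    (f : X → X) (hf_inj : Function.Injective f) (hf_meas : Measurable f)
    (hf_bi : ∀ B : Set X, MeasurableSet B → MeasurableSet (f '' B))
    (c : ℝ≥0∞) (hc : 0 < c) (hcT : c ≠ ⊤)
    (hb : ∀ B : Set X, MeasurableSet B → μ (f ⁻¹' B) ≤ c * μ B) :
    (∀ M : ℝ≥0∞, M ≠ ⊤ → ∃ N : ℕ, ∀ n ≥ N, ∀ φ : X → ℂ,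
        MemLp φ p μ → eLpNorm φ p μ = 1 →
        M ≤ eLpNorm (φ ∘ (f^[n])) p μ) ↔
    (∀ M : ℝ≥0∞, M ≠ ⊤ → ∃ N : ℕ, ∀ n ≥ N, ∀ B : Set X,
        MeasurableSet B → 0 < μ B → μ B ≠ ⊤ →
        M * μ B ≤ μ ((f^[n]) ⁻¹' B)) :=
  stmt_3_general μ p hp1 hpT f hf_meas c hb
end

section
/- Let $(X,\mathcal{B},\mu,f,T_f)$ be a composition dynamical system with $f$ invertible and $T_f$ invertible on $L^p(X)$, $1\le p<\infty$. Then $T_f$ is uniformly expansive if and only if $\mathcal{B}^+=\{B:0<\mu(B)<\infty\}$ can be written as a union $\mathcal{B}^+=\mathcal{B}^+_{\mathcal{A}}\cup\mathcal{B}^+_{\mathcal{C}}$ such that $\mu(f^n(B))/\mu(B)\to\infty$ uniformly on $\mathcal{B}^+_{\mathcal{A}}$ and $\mu(f^{-n}(B))/\mu(B)\to\infty$ uniformly on $\mathcal{B}^+_{\mathcal{C}}$. -/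
open MeasureTheory Set ENNReal

/-! Testing `T_f^{±n}` on the normalized indicators `1_B / μ(B)^{1/p}` turns norm growth into
measure growth, because `‖1_B ∘ T‖_p^p = μ(T⁻¹ B)`; since `1_B ∘ fⁿ` sees `f⁻ⁿ(B)`, the sets whose
indicator lies in `𝓒` form `𝓑⁺_𝓐` and vice versa.

Conversely, cut a unit vector `φ` into the dyadic level sets `E_k = {2^k ≤ |φ|^p < 2^(k+1)}`, which
lie in `𝓑⁺` by Markov's inequality. Since `∑ 2^k μ(E_k) ≥ 1/2`, a quarter of this mass sits on
levels in `𝓑⁺_𝓐` or on levels in `𝓑⁺_𝓒`; on the images (resp. preimages) of those levels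
`|φ ∘ f^{∓n}|^p ≥ 2^k`, and their measures grow uniformly. -/

section DyadicLevels

variable {X : Type*} {g : X → ℝ≥0∞}

def dyadicLevel (g : X → ℝ≥0∞) (k : ℤ) : Set X := g ⁻¹' Ico (2 ^ k) (2 ^ (k + 1))

lemma pairwise_disjoint_dyadicLevel (g : X → ℝ≥0∞) :
    Pairwise (Function.onFun Disjoint (dyadicLevel g)) := by
  have hmono : Monotone fun k : ℤ => (2 : ℝ≥0∞) ^ k := fun _ _ h => zpow_le_of_le one_le_two h
  exact fun k k' hne => (hmono.pairwise_disjoint_on_Ico_succ hne).preimage g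

lemma support_subset_iUnion_dyadicLevel (hfin : ∀ x, g x ≠ ⊤) :
    Function.support g ⊆ ⋃ k, dyadicLevel g k := fun x hx =>
  mem_iUnion.2 (ENNReal.exists_mem_Ico_zpow hx (hfin x) one_lt_two ofNat_ne_top)

variable [MeasurableSpace X] (μ : Measure X)

noncomputable def dyadicMass (g : X → ℝ≥0∞) (𝓢 : Set (Set X)) : ℝ≥0∞ :=
  ∑' k : {k : ℤ | dyadicLevel g k ∈ 𝓢}, 2 ^ (k : ℤ) * μ (dyadicLevel g k)

variable {μ}

lemma measurableSet_dyadicLevel (hg : Measurable g) (k : ℤ) : MeasurableSet (dyadicLevel g k) :=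
  hg measurableSet_Ico

lemma measure_dyadicLevel_ne_top (hg : Measurable g) (hint : ∫⁻ x, g x ∂μ ≠ ⊤) (k : ℤ) :
    μ (dyadicLevel g k) ≠ ⊤ := by
  have h2k : (2 : ℝ≥0∞) ^ k ≠ 0 := (ENNReal.zpow_pos two_ne_zero ofNat_ne_top k).ne'
  refine ne_top_of_le_ne_top ?_ (measure_mono fun x (hx : x ∈ dyadicLevel g k) => hx.1)
  exact ne_top_of_le_ne_top (ENNReal.div_ne_top hint h2k)
    (meas_ge_le_lintegral_div hg.aemeasurable h2k (ENNReal.zpow_ne_top two_ne_zero ofNat_ne_top k))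

lemma lintegral_le_two_mul_tsum_dyadicLevel (hg : Measurable g) (hfin : ∀ x, g x ≠ ⊤) :
    ∫⁻ x, g x ∂μ ≤ 2 * ∑' k : ℤ, 2 ^ k * μ (dyadicLevel g k) :=
  calc ∫⁻ x, g x ∂μ = ∫⁻ x in ⋃ k, dyadicLevel g k, g x ∂μ :=
        (setLIntegral_eq_of_support_subset (support_subset_iUnion_dyadicLevel hfin)).symm
    _ = ∑' k : ℤ, ∫⁻ x in dyadicLevel g k, g x ∂μ :=
        lintegral_iUnion (measurableSet_dyadicLevel hg) (pairwise_disjoint_dyadicLevel g) _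
    _ ≤ ∑' k : ℤ, 2 ^ (k + 1) * μ (dyadicLevel g k) := by
        refine ENNReal.tsum_le_tsum fun k => ?_
        rw [← setLIntegral_const]
        exact setLIntegral_mono measurable_const fun x hx => hx.2.le
    _ = 2 * ∑' k : ℤ, 2 ^ k * μ (dyadicLevel g k) := by
        rw [← ENNReal.tsum_mul_left]
        congr 1 with k
        rw [ENNReal.zpow_add two_ne_zero ofNat_ne_top, zpow_one]
        ring

lemma tsum_dyadicLevel_le_dyadicMass_add {𝓐 𝓒 : Set (Set X)}
    (hsplit : ∀ k, μ (dyadicLevel g k) ≠ 0 → dyadicLevel g k ∈ 𝓐 ∪ 𝓒) :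
    ∑' k : ℤ, 2 ^ k * μ (dyadicLevel g k) ≤ dyadicMass μ g 𝓐 + dyadicMass μ g 𝓒 := by
  set f : ℤ → ℝ≥0∞ := fun k => 2 ^ k * μ (dyadicLevel g k)
  rw [dyadicMass, dyadicMass, tsum_subtype _ f, tsum_subtype _ f, ← ENNReal.tsum_add]
  refine ENNReal.tsum_le_tsum fun k => ?_
  by_cases h0 : μ (dyadicLevel g k) = 0
  · simp [h0]
  rcases hsplit k h0 with h | h
  · exact le_add_right (indicator_of_mem (s := {k | dyadicLevel g k ∈ 𝓐}) h f).ge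
  · exact le_add_left (indicator_of_mem (s := {k | dyadicLevel g k ∈ 𝓒}) h f).ge

lemma mul_dyadicMass_le_lintegral_comp (hg : Measurable g) {T : X → X} (hT : Measurable T)
    {𝓢 : Set (Set X)} {M : ℝ≥0∞} (hS : ∀ B ∈ 𝓢, M * μ B ≤ μ (T ⁻¹' B)) :
    M * dyadicMass μ g 𝓢 ≤ ∫⁻ x, g (T x) ∂μ := by
  let K := {k : ℤ | dyadicLevel g k ∈ 𝓢}
  have hdisj : Pairwise (Function.onFun Disjoint fun k : K => T ⁻¹' dyadicLevel g k) :=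
    fun k k' hne => (pairwise_disjoint_dyadicLevel g (Subtype.coe_injective.ne hne)).preimage T
  calc M * dyadicMass μ g 𝓢
      = ∑' k : K, 2 ^ (k : ℤ) * (M * μ (dyadicLevel g k)) := by
        rw [dyadicMass, ← ENNReal.tsum_mul_left]
        congr 1 with k
        ring
    _ ≤ ∑' k : K, ∫⁻ x in T ⁻¹' dyadicLevel g k, g (T x) ∂μ := by
        refine ENNReal.tsum_le_tsum fun k => ?_
        calc 2 ^ (k : ℤ) * (M * μ (dyadicLevel g k))
            ≤ 2 ^ (k : ℤ) * μ (T ⁻¹' dyadicLevel g k) := by gcongr; exact hS _ k.2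
          _ ≤ ∫⁻ x in T ⁻¹' dyadicLevel g k, g (T x) ∂μ := by
            rw [← setLIntegral_const]
            exact setLIntegral_mono (hg.comp hT) fun x hx => hx.1
    _ = ∫⁻ x in ⋃ k : K, T ⁻¹' dyadicLevel g k, g (T x) ∂μ :=
        (lintegral_iUnion (fun k : K => hT (measurableSet_dyadicLevel hg k)) hdisj _).symm
    _ ≤ ∫⁻ x, g (T x) ∂μ := setLIntegral_le_lintegral _ _

end DyadicLevels

lemma MeasureTheory.Measure.QuasiMeasurePreserving.of_measure_preimage_le {α β : Type*}
    [MeasurableSpace α] [MeasurableSpace β] {μ : Measure α} {ν : Measure β} {f : α → β} {c : ℝ≥0∞}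
    (hf : Measurable f) (h : ∀ B, MeasurableSet B → μ (f ⁻¹' B) ≤ c * ν B) :
    Measure.QuasiMeasurePreserving f μ ν :=
  ⟨hf, Measure.absolutelyContinuous_of_le_smul <| Measure.le_iff.2 fun B hB => by
    simpa [Measure.map_apply hf hB] using h B hB⟩

lemma Equiv.Perm.preimage_zpow_neg {X : Type*} (e : Equiv.Perm X) (n : ℤ) (B : Set X) :
    ⇑(e ^ (-n)) ⁻¹' B = ⇑(e ^ n) '' B := by
  rw [zpow_neg, Equiv.Perm.coe_inv, Equiv.image_eq_preimage_symm]

section CompositionOperator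

variable {X : Type*} [MeasurableSpace X] {μ : Measure X}

lemma Equiv.Perm.quasiMeasurePreserving_zpow {e : Equiv.Perm X} {c c' : ℝ≥0∞}
    (he : Measurable e) (he' : Measurable e.symm)
    (hb : ∀ B : Set X, MeasurableSet B → μ (⇑e ⁻¹' B) ≤ c * μ B)
    (hb' : ∀ B : Set X, MeasurableSet B → μ (⇑e '' B) ≤ c' * μ B) (k : ℤ) :
    Measure.QuasiMeasurePreserving ⇑(e ^ k) μ μ := by
  have hfwd := Measure.QuasiMeasurePreserving.of_measure_preimage_le he hb
  have hbwd : Measure.QuasiMeasurePreserving ⇑(e⁻¹) μ μ :=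
    .of_measure_preimage_le he' fun B hB => by
      simpa [Equiv.image_eq_preimage_symm] using hb' B hB
  induction k using Int.induction_on with
  | zero => exact Measure.QuasiMeasurePreserving.id μ
  | succ n ih => rw [zpow_add_one, Equiv.Perm.coe_mul]; exact ih.comp hfwd
  | pred n ih => rw [zpow_sub_one, Equiv.Perm.coe_mul]; exact ih.comp hbwd

variable (μ) in
def UniformlyExpansiveOnLp (p : ℝ≥0∞) (e : Equiv.Perm X) : Prop :=
  ∃ A C : Set (X → ℂ),
    {φ : X → ℂ | MemLp φ p μ ∧ eLpNorm φ p μ = 1} = A ∪ C ∧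
    (∀ M : ℝ≥0∞, M ≠ ⊤ → ∃ N : ℕ, ∀ n ≥ N,
      (∀ φ ∈ A, M ≤ eLpNorm (φ ∘ ⇑(e ^ (n : ℤ))) p μ) ∧
      (∀ φ ∈ C, M ≤ eLpNorm (φ ∘ ⇑(e ^ (-(n : ℤ)))) p μ))

variable (μ) in
def UniformlyExpandsPositiveSets (e : Equiv.Perm X) : Prop :=
  ∃ 𝓐 𝓒 : Set (Set X),
    {B : Set X | MeasurableSet B ∧ 0 < μ B ∧ μ B ≠ ⊤} = 𝓐 ∪ 𝓒 ∧
    (∀ M : ℝ≥0∞, M ≠ ⊤ → ∃ N : ℕ, ∀ n ≥ N,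
      (∀ B ∈ 𝓐, M * μ B ≤ μ (⇑(e ^ (n : ℤ)) '' B)) ∧
      (∀ B ∈ 𝓒, M * μ B ≤ μ (⇑(e ^ (n : ℤ)) ⁻¹' B)))

variable {p : ℝ≥0∞}

lemma le_eLpNorm_iff {ε : Type*} [ENorm ε] (hp0 : p ≠ 0) (hpT : p ≠ ⊤) {f : X → ε}
    {M : ℝ≥0∞} :
    M ≤ eLpNorm f p μ ↔ M ^ p.toReal ≤ ∫⁻ x, ‖f x‖ₑ ^ p.toReal ∂μ := by
  rw [eLpNorm_eq_lintegral_rpow_enorm_toReal hp0 hpT, one_div,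
    ENNReal.le_rpow_inv_iff (toReal_pos hp0 hpT)]

variable (μ p) in
noncomputable def normalizedIndicator (B : Set X) : X → ℂ :=
  B.indicator fun _ => ((μ B ^ (1 / p.toReal))⁻¹.toReal : ℂ)

lemma eLpNorm_normalizedIndicator_comp (hp0 : p ≠ 0) (hpT : p ≠ ⊤) {B : Set X}
    (hB : MeasurableSet B) (h0 : μ B ≠ 0) {T : X → X} (hT : Measurable T) :
    eLpNorm (normalizedIndicator μ p B ∘ T) p μ = (μ (T ⁻¹' B) / μ B) ^ (1 / p.toReal) := by
  have hpos : 0 < 1 / p.toReal := by have := toReal_pos hp0 hpT; positivity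
  have hcomp : normalizedIndicator μ p B ∘ T =
      (T ⁻¹' B).indicator fun _ => ((μ B ^ (1 / p.toReal))⁻¹.toReal : ℂ) := rfl
  have hinv : (μ B ^ (1 / p.toReal))⁻¹ ≠ ⊤ :=
    ENNReal.inv_ne_top.2 (ENNReal.rpow_pos_of_nonneg (pos_iff_ne_zero.2 h0) hpos.le).ne'
  rw [hcomp, eLpNorm_indicator_const (hT hB) hp0 hpT, ← ofReal_norm,
    Complex.norm_of_nonneg toReal_nonneg, ofReal_toReal hinv,
    ENNReal.div_rpow_of_nonneg _ _ hpos.le, ENNReal.div_eq_inv_mul]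

lemma normalizedIndicator_mem_unitSphere (hp0 : p ≠ 0) (hpT : p ≠ ⊤) {B : Set X}
    (hB : MeasurableSet B) (h0 : μ B ≠ 0) (hBT : μ B ≠ ⊤) :
    MemLp (normalizedIndicator μ p B) p μ ∧ eLpNorm (normalizedIndicator μ p B) p μ = 1 := by
  refine ⟨memLp_indicator_const p hB _ (Or.inr hBT), ?_⟩
  simpa [ENNReal.div_self h0 hBT] using
    eLpNorm_normalizedIndicator_comp hp0 hpT hB h0 measurable_id

lemma mul_le_measure_preimage_of_le_eLpNorm (hp0 : p ≠ 0) (hpT : p ≠ ⊤) {B : Set X}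
    (hB : MeasurableSet B) (h0 : μ B ≠ 0) (hBT : μ B ≠ ⊤) {T : X → X} (hT : Measurable T)
    {M : ℝ≥0∞} (h : M ^ (1 / p.toReal) ≤ eLpNorm (normalizedIndicator μ p B ∘ T) p μ) :
    M * μ B ≤ μ (T ⁻¹' B) := by
  have hpos : 0 < 1 / p.toReal := by have := toReal_pos hp0 hpT; positivity
  rwa [eLpNorm_normalizedIndicator_comp hp0 hpT hB h0 hT, ENNReal.rpow_le_rpow_iff hpos,
    ENNReal.le_div_iff_mul_le (Or.inl h0) (Or.inl hBT)] at h

lemma le_eLpNorm_comp_of_inv_four_le_dyadicMass (hp0 : p ≠ 0) (hpT : p ≠ ⊤) {φ ψ : X → ℂ}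
    (hψ : Measurable ψ) (hφψ : φ =ᵐ[μ] ψ) {T : X → X} (hT : Measure.QuasiMeasurePreserving T μ μ)
    {𝓢 : Set (Set X)} {M : ℝ≥0∞} (hS : ∀ B ∈ 𝓢, 4 * M ^ p.toReal * μ B ≤ μ (T ⁻¹' B))
    (hmass : 4⁻¹ ≤ dyadicMass μ (fun x => ‖ψ x‖ₑ ^ p.toReal) 𝓢) :
    M ≤ eLpNorm (φ ∘ T) p μ := by
  rw [eLpNorm_congr_ae (hT.ae_eq_comp hφψ), le_eLpNorm_iff hp0 hpT]
  calc M ^ p.toReal = 4 * M ^ p.toReal * 4⁻¹ := by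
        rw [mul_comm 4, mul_assoc, ENNReal.mul_inv_cancel (by norm_num) (by norm_num), mul_one]
    _ ≤ 4 * M ^ p.toReal * dyadicMass μ (fun x => ‖ψ x‖ₑ ^ p.toReal) 𝓢 := by gcongr
    _ ≤ ∫⁻ x, ‖(ψ ∘ T) x‖ₑ ^ p.toReal ∂μ :=
        mul_dyadicMass_le_lintegral_comp (by fun_prop) hT.measurable hS

lemma exists_inv_four_le_dyadicMass (hp0 : p ≠ 0) (hpT : p ≠ ⊤) {φ : X → ℂ}
    (hφ : MemLp φ p μ) (h1 : eLpNorm φ p μ = 1) {𝓐 𝓒 : Set (Set X)}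
    (hsplit : {B : Set X | MeasurableSet B ∧ 0 < μ B ∧ μ B ≠ ⊤} = 𝓐 ∪ 𝓒) :
    ∃ ψ : X → ℂ, Measurable ψ ∧ φ =ᵐ[μ] ψ ∧
      (4⁻¹ ≤ dyadicMass μ (fun x => ‖ψ x‖ₑ ^ p.toReal) 𝓐 ∨
        4⁻¹ ≤ dyadicMass μ (fun x => ‖ψ x‖ₑ ^ p.toReal) 𝓒) := by
  set ψ := hφ.1.mk φ
  have hψ : Measurable ψ := hφ.1.stronglyMeasurable_mk.measurable
  have hψ1 : eLpNorm ψ p μ = 1 := (eLpNorm_congr_ae hφ.1.ae_eq_mk).symm.trans h1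
  set g : X → ℝ≥0∞ := fun x => ‖ψ x‖ₑ ^ p.toReal
  have hg : Measurable g := by fun_prop
  have hint : ∫⁻ x, g x ∂μ ≠ ⊤ :=
    (lintegral_rpow_enorm_lt_top_of_eLpNorm_lt_top hp0 hpT (by simp [hψ1])).ne
  have hlevels : ∀ k, μ (dyadicLevel g k) ≠ 0 → dyadicLevel g k ∈ 𝓐 ∪ 𝓒 := fun k h0 => by
    rw [← hsplit]
    exact ⟨measurableSet_dyadicLevel hg k, pos_iff_ne_zero.2 h0,
      measure_dyadicLevel_ne_top hg hint k⟩
  have hone : 1 ≤ 2 * (dyadicMass μ g 𝓐 + dyadicMass μ g 𝓒) :=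
    calc 1 ≤ ∫⁻ x, g x ∂μ := by simpa using (le_eLpNorm_iff hp0 hpT).1 hψ1.ge
      _ ≤ 2 * ∑' k : ℤ, 2 ^ k * μ (dyadicLevel g k) :=
          lintegral_le_two_mul_tsum_dyadicLevel hg fun _ =>
            rpow_ne_top_of_nonneg toReal_nonneg enorm_ne_top
      _ ≤ 2 * (dyadicMass μ g 𝓐 + dyadicMass μ g 𝓒) := by
          gcongr; exact tsum_dyadicLevel_le_dyadicMass_add hlevels
  refine ⟨ψ, hψ, hφ.1.ae_eq_mk, ?_⟩
  by_contra! h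
  refine (hone.trans_lt ?_).false
  calc 2 * (dyadicMass μ g 𝓐 + dyadicMass μ g 𝓒) < 2 * (4⁻¹ + 4⁻¹) :=
        ENNReal.mul_lt_mul_right two_ne_zero ofNat_ne_top (ENNReal.add_lt_add h.1 h.2)
    _ = 1 := by
        rw [← two_mul, ← mul_assoc, ← ENNReal.mul_inv_cancel (a := 4) (by norm_num) (by norm_num)]
        norm_num

lemma UniformlyExpansiveOnLp.uniformlyExpandsPositiveSets (hp0 : p ≠ 0) (hpT : p ≠ ⊤)
    {e : Equiv.Perm X} (he : ∀ k : ℤ, Measurable ⇑(e ^ k)) (h : UniformlyExpansiveOnLp μ p e) :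
    UniformlyExpandsPositiveSets μ e := by
  obtain ⟨A, C, hsphere, hgrow⟩ := h
  refine ⟨{B | (MeasurableSet B ∧ 0 < μ B ∧ μ B ≠ ⊤) ∧ normalizedIndicator μ p B ∈ C},
    {B | (MeasurableSet B ∧ 0 < μ B ∧ μ B ≠ ⊤) ∧ normalizedIndicator μ p B ∈ A}, ?_, ?_⟩
  · ext B
    refine ⟨fun hB => ?_, by rintro (⟨hB, -⟩ | ⟨hB, -⟩) <;> exact hB⟩
    have : normalizedIndicator μ p B ∈ A ∪ C := by
      rw [← hsphere]
      exact normalizedIndicator_mem_unitSphere hp0 hpT hB.1 hB.2.1.ne' hB.2.2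
    rcases this with hA | hC
    exacts [Or.inr ⟨hB, hA⟩, Or.inl ⟨hB, hC⟩]
  · intro M hM
    obtain ⟨N, hN⟩ := hgrow (M ^ (1 / p.toReal)) (rpow_ne_top_of_nonneg (by positivity) hM)
    refine ⟨N, fun n hn => ⟨?_, ?_⟩⟩
    · rintro B ⟨⟨hB, h0, hBT⟩, hC⟩
      rw [← Equiv.Perm.preimage_zpow_neg]
      exact mul_le_measure_preimage_of_le_eLpNorm hp0 hpT hB h0.ne' hBT (he _) ((hN n hn).2 _ hC)
    · rintro B ⟨⟨hB, h0, hBT⟩, hA⟩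
      exact mul_le_measure_preimage_of_le_eLpNorm hp0 hpT hB h0.ne' hBT (he _) ((hN n hn).1 _ hA)

lemma UniformlyExpandsPositiveSets.uniformlyExpansiveOnLp (hp0 : p ≠ 0) (hpT : p ≠ ⊤)
    {e : Equiv.Perm X} (he : ∀ k : ℤ, Measure.QuasiMeasurePreserving ⇑(e ^ k) μ μ)
    (h : UniformlyExpandsPositiveSets μ e) : UniformlyExpansiveOnLp μ p e := by
  obtain ⟨𝓐, 𝓒, hsplit, hgrow⟩ := h
  let expandsAlong (𝓢 : Set (Set X)) : Set (X → ℂ) :=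
    {φ | (MemLp φ p μ ∧ eLpNorm φ p μ = 1) ∧ ∃ ψ : X → ℂ, Measurable ψ ∧ φ =ᵐ[μ] ψ ∧
      4⁻¹ ≤ dyadicMass μ (fun x => ‖ψ x‖ₑ ^ p.toReal) 𝓢}
  refine ⟨expandsAlong 𝓒, expandsAlong 𝓐, ?_, ?_⟩
  · ext φ
    refine ⟨fun hφ => ?_, by rintro (⟨hφ, -⟩ | ⟨hφ, -⟩) <;> exact hφ⟩
    obtain ⟨ψ, hψ, hφψ, hA | hC⟩ := exists_inv_four_le_dyadicMass hp0 hpT hφ.1 hφ.2 hsplit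
    exacts [Or.inr ⟨hφ, ψ, hψ, hφψ, hA⟩, Or.inl ⟨hφ, ψ, hψ, hφψ, hC⟩]
  · intro M hM
    obtain ⟨N, hN⟩ := hgrow (4 * M ^ p.toReal)
      (mul_ne_top ofNat_ne_top (rpow_ne_top_of_nonneg toReal_nonneg hM))
    refine ⟨N, fun n hn => ⟨?_, ?_⟩⟩
    · rintro φ ⟨-, ψ, hψ, hφψ, hC⟩
      exact le_eLpNorm_comp_of_inv_four_le_dyadicMass hp0 hpT hψ hφψ (he _) (hN n hn).2 hC
    · rintro φ ⟨-, ψ, hψ, hφψ, hA⟩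
      refine le_eLpNorm_comp_of_inv_four_le_dyadicMass hp0 hpT hψ hφψ (he _) (fun B hB => ?_) hA
      rw [Equiv.Perm.preimage_zpow_neg]
      exact (hN n hn).1 B hB

end CompositionOperator

theorem stmt_4_general
    {X : Type*} [MeasurableSpace X] (μ : Measure X)
    (p : ℝ≥0∞) (hp1 : 1 ≤ p) (hpT : p ≠ ⊤)
    (e : Equiv.Perm X) (he : Measurable e) (he' : Measurable e.symm)
    (c c' : ℝ≥0∞)
    (hb : ∀ B : Set X, MeasurableSet B → μ (⇑e ⁻¹' B) ≤ c * μ B)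
    (hb' : ∀ B : Set X, MeasurableSet B → μ (⇑e '' B) ≤ c' * μ B) :
    -- uniform expansivity: the unit sphere of `L^p` splits as `𝓐 ∪ 𝓒`
    (∃ A C : Set (X → ℂ),
        {φ : X → ℂ | MemLp φ p μ ∧ eLpNorm φ p μ = 1} = A ∪ C ∧
        (∀ M : ℝ≥0∞, M ≠ ⊤ → ∃ N : ℕ, ∀ n ≥ N,
          (∀ φ ∈ A, M ≤ eLpNorm (φ ∘ ⇑(e ^ (n : ℤ))) p μ) ∧
          (∀ φ ∈ C, M ≤ eLpNorm (φ ∘ ⇑(e ^ (-(n : ℤ)))) p μ))) ↔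
    -- splitting of `𝓑⁺`
    (∃ 𝓐 𝓒 : Set (Set X),
        {B : Set X | MeasurableSet B ∧ 0 < μ B ∧ μ B ≠ ⊤} = 𝓐 ∪ 𝓒 ∧
        (∀ M : ℝ≥0∞, M ≠ ⊤ → ∃ N : ℕ, ∀ n ≥ N,
          (∀ B ∈ 𝓐, M * μ B ≤ μ (⇑(e ^ (n : ℤ)) '' B)) ∧
          (∀ B ∈ 𝓒, M * μ B ≤ μ (⇑(e ^ (n : ℤ)) ⁻¹' B)))) := by
  have hp0 : p ≠ 0 := (zero_lt_one.trans_le hp1).ne'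
  have hqmp := Equiv.Perm.quasiMeasurePreserving_zpow he he' hb hb'
  exact ⟨UniformlyExpansiveOnLp.uniformlyExpandsPositiveSets hp0 hpT fun k => (hqmp k).measurable,
    UniformlyExpandsPositiveSets.uniformlyExpansiveOnLp hp0 hpT hqmp⟩

/-- Theorem E(4): `T_f` is uniformly expansive iff `𝓑⁺` splits as
`𝓑⁺ = 𝓑⁺_𝓐 ∪ 𝓑⁺_𝓒` with `μ(fⁿ(B))/μ(B) → ∞` uniformly on `𝓑⁺_𝓐` and
`μ(f⁻ⁿ(B))/μ(B) → ∞` uniformly on `𝓑⁺_𝓒`. -/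
theorem stmt_4
    {X : Type*} [MeasurableSpace X] (μ : Measure X) [SigmaFinite μ]
    (p : ℝ≥0∞) (hp1 : 1 ≤ p) (hpT : p ≠ ⊤)
    (e : Equiv.Perm X) (he : Measurable e) (he' : Measurable e.symm)
    (c c' : ℝ≥0∞) (hc : 0 < c) (hcT : c ≠ ⊤) (hc' : 0 < c') (hc'T : c' ≠ ⊤)
    (hb : ∀ B : Set X, MeasurableSet B → μ (⇑e ⁻¹' B) ≤ c * μ B)
    (hb' : ∀ B : Set X, MeasurableSet B → μ (⇑e '' B) ≤ c' * μ B) :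
    -- uniform expansivity: the unit sphere of `L^p` splits as `𝓐 ∪ 𝓒`
    (∃ A C : Set (X → ℂ),
        {φ : X → ℂ | MemLp φ p μ ∧ eLpNorm φ p μ = 1} = A ∪ C ∧
        (∀ M : ℝ≥0∞, M ≠ ⊤ → ∃ N : ℕ, ∀ n ≥ N,
          (∀ φ ∈ A, M ≤ eLpNorm (φ ∘ ⇑(e ^ (n : ℤ))) p μ) ∧
          (∀ φ ∈ C, M ≤ eLpNorm (φ ∘ ⇑(e ^ (-(n : ℤ)))) p μ))) ↔
    -- splitting of `𝓑⁺`
    (∃ 𝓐 𝓒 : Set (Set X),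
        {B : Set X | MeasurableSet B ∧ 0 < μ B ∧ μ B ≠ ⊤} = 𝓐 ∪ 𝓒 ∧
        (∀ M : ℝ≥0∞, M ≠ ⊤ → ∃ N : ℕ, ∀ n ≥ N,
          (∀ B ∈ 𝓐, M * μ B ≤ μ (⇑(e ^ (n : ℤ)) '' B)) ∧
          (∀ B ∈ 𝓒, M * μ B ≤ μ (⇑(e ^ (n : ℤ)) ⁻¹' B)))) :=
  stmt_4_general μ p hp1 hpT e he he' c c' hb hb'
end

section
/- Let $(X,\mathcal{B},\mu,f,T_f)$ be a dissipative composition dynamical system of bounded distortion generated by $W$, with $T_f$ invertible. Then $T_f$ is expansive if and only if $\sup_{n\in\mathbb{Z}}\mu(f^n(W))=\infty$. -/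
open MeasureTheory Filter Set ENNReal

/-!
Since `e` and `e⁻¹` map null sets to null sets, so does every `e ^ n`. If the measures
`μ (eⁿ '' W)` are bounded, the indicator of `W` has bounded orbit, because
`‖1_W ∘ eⁿ‖ₚ = μ (e⁻ⁿ '' W) ^ (1 / p)`. Conversely, a nonzero `φ ∈ Lᵖ` has `‖φ‖ ≥ ε` on a set `B`
of positive measure; by the covering, `B` meets some `eᵏ '' W` in positive measure, and bounded
distortion of the piece pulled back into `W` forces `μ (eⁿ '' B)` to be unbounded. Chebyshev's
inequality `εᵖ μ (e⁻ⁿ '' B) ≤ ‖φ ∘ eⁿ‖ₚᵖ` then makes the orbit of `φ` unbounded.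
-/

theorem ENNReal.iSup_rpow {ι : Sort*} (a : ι → ℝ≥0∞) {y : ℝ} (hy : 0 < y) :
    (⨆ i, a i) ^ y = ⨆ i, a i ^ y :=
  (orderIsoRpow y hy).map_iSup a

theorem ENNReal.iSup_eq_top_of_le_mul {ι : Sort*} {a b : ι → ℝ≥0∞} {C : ℝ≥0∞} (hC : C ≠ ⊤)
    (hab : ∀ i, a i ≤ C * b i) (ha : ⨆ i, a i = ⊤) : ⨆ i, b i = ⊤ := by
  by_contra hb
  have : ⨆ i, a i ≤ C * ⨆ i, b i := by
    rw [ENNReal.mul_iSup]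
    exact iSup_mono hab
  exact mul_ne_top hC hb (top_le_iff.1 (ha ▸ this))

theorem exists_measurableSet_measure_ne_zero_forall_le {X : Type*} [MeasurableSpace X]
    {μ : Measure X} {f : X → ℝ≥0∞} (hf : AEMeasurable f μ) (hf0 : ¬ f =ᵐ[μ] 0) :
    ∃ ε ≠ 0, ε ≠ ⊤ ∧ ∃ B, MeasurableSet B ∧ μ B ≠ 0 ∧ ∀ x ∈ B, ε ≤ f x := by
  -- `(n + 1)⁻¹` rather than `n⁻¹`, which is `⊤` at `n = 0`
  have hcover : {x | f x ≠ 0} ⊆ ⋃ n : ℕ, {x | ((n + 1 : ℕ) : ℝ≥0∞)⁻¹ ≤ f x} := fun x hx =>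
    mem_iUnion.2 ((exists_inv_nat_lt hx).imp fun n h =>
      (ENNReal.inv_le_inv.2 (Nat.cast_le.2 n.le_succ)).trans h.le)
  obtain ⟨n, hn⟩ : ∃ n : ℕ, μ {x | ((n + 1 : ℕ) : ℝ≥0∞)⁻¹ ≤ f x} ≠ 0 := by
    by_contra! h
    exact hf0 (ae_iff.2 (measure_mono_null hcover (measure_iUnion_null h)))
  obtain ⟨B, hBsub, hBm, hBae⟩ :=
    (nullMeasurableSet_le aemeasurable_const hf).exists_measurable_subset_ae_eq
  exact ⟨_, ENNReal.inv_ne_zero.2 (natCast_ne_top _),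
    ENNReal.inv_ne_top.2 (Nat.cast_ne_zero.2 n.succ_ne_zero), B, hBm,
    by rwa [measure_congr hBae], fun x hx => hBsub hx⟩

namespace MeasureTheory.Measure.QuasiMeasurePreserving

variable {X Y : Type*} [MeasurableSpace X] [MeasurableSpace Y] {μ : Measure X} {ν : Measure Y}

theorem of_measure_preimage_le_s7 {f : X → Y} {c : ℝ≥0∞} (hf : Measurable f)
    (h : ∀ B, MeasurableSet B → μ (f ⁻¹' B) ≤ c * ν B) : QuasiMeasurePreserving f μ ν :=
  ⟨hf, Measure.AbsolutelyContinuous.mk fun B hB hB0 => by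
    rw [Measure.map_apply hf hB]
    simpa [hB0] using h B hB⟩

end MeasureTheory.Measure.QuasiMeasurePreserving

theorem Equiv.Perm.preimage_zpow {X : Type*} (e : Equiv.Perm X) (n : ℤ) (s : Set X) :
    ⇑(e ^ n) ⁻¹' s = ⇑(e ^ (-n)) '' s := by
  rw [Equiv.image_eq_preimage_symm, zpow_neg, Equiv.Perm.inv_def, Equiv.symm_symm]

section

open MeasureTheory.Measure (QuasiMeasurePreserving)

variable {X : Type*} [MeasurableSpace X] {μ : Measure X}

def quasiMeasurePreservingPermSubgroup (μ : Measure X) : Subgroup (Equiv.Perm X) where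
  carrier := {g | QuasiMeasurePreserving g μ μ ∧ QuasiMeasurePreserving g.symm μ μ}
  mul_mem' hg hh := ⟨hg.1.comp hh.1, hh.2.comp hg.2⟩
  one_mem' := ⟨.id μ, .id μ⟩
  inv_mem' hg := ⟨hg.2, hg.1⟩

theorem iSup_measure_image_eq_top_of_distortion {ι : Sort*} {f : ι → X → X} {W B : Set X}
    {K : ℝ≥0∞} (hK0 : K ≠ 0) (hKT : K ≠ ⊤) (hWT : μ W ≠ ⊤) (hBW : B ⊆ W) (hB0 : μ B ≠ 0)
    (hbd : ∀ i, K⁻¹ * (μ (f i '' W) * μ B) ≤ μ (f i '' B) * μ W)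
    (hW : ⨆ i, μ (f i '' W) = ⊤) : ⨆ i, μ (f i '' B) = ⊤ := by
  have hBT : μ B ≠ ⊤ := ne_top_of_le_ne_top hWT (measure_mono hBW)
  refine ENNReal.iSup_eq_top_of_le_mul (div_ne_top (mul_ne_top hKT hWT) hB0) (fun i => ?_) hW
  rw [div_eq_mul_inv, mul_right_comm, ← div_eq_mul_inv,
    ENNReal.le_div_iff_mul_le (.inl hB0) (.inl hBT)]
  exact ((ENNReal.inv_mul_le_iff hK0 hKT).1 (hbd i)).trans_eq (by ring)

theorem iSup_measure_zpow_image_eq_top {e : Equiv.Perm X}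
    (he : e ∈ quasiMeasurePreservingPermSubgroup μ) {W : Set X} (hWm : MeasurableSet W)
    (hWT : μ W ≠ ⊤) (hcover : (⋃ k : ℤ, ⇑(e ^ k) '' W) = univ) {K : ℝ≥0∞} (hK0 : K ≠ 0)
    (hKT : K ≠ ⊤) (hbd : ∀ (k : ℤ) (B : Set X), MeasurableSet B → B ⊆ W →
      K⁻¹ * (μ (⇑(e ^ k) '' W) * μ B) ≤ μ (⇑(e ^ k) '' B) * μ W)
    (hW : ⨆ n : ℤ, μ (⇑(e ^ n) '' W) = ⊤) {B : Set X} (hBm : MeasurableSet B) (hB0 : μ B ≠ 0) :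
    ⨆ n : ℤ, μ (⇑(e ^ n) '' B) = ⊤ := by
  have hQ (n : ℤ) := zpow_mem he n
  obtain ⟨k, hk⟩ : ∃ k : ℤ, μ (B ∩ ⇑(e ^ k) '' W) ≠ 0 := by
    by_contra! h
    exact hB0 (by simpa [← inter_iUnion, hcover] using measure_iUnion_null h)
  set B' := ⇑(e ^ k) ⁻¹' B ∩ W
  have hB'm : MeasurableSet B' := ((hQ k).1.measurable hBm).inter hWm
  have hB'0 : μ B' ≠ 0 := by
    refine fun h => hk ?_
    rw [← image_preimage_inter, Equiv.image_eq_preimage_symm]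
    exact (hQ k).2.preimage_null h
  have hB' := iSup_measure_image_eq_top_of_distortion (f := fun n : ℤ => ⇑(e ^ n)) hK0 hKT hWT
    inter_subset_right hB'0 (fun n => hbd n B' hB'm inter_subset_right) hW
  refine top_unique (hB' ▸ iSup_le fun m => (measure_mono ?_).trans
    (le_iSup (fun n : ℤ => μ (⇑(e ^ n) '' B)) (m - k)))
  rintro _ ⟨y, ⟨hy, -⟩, rfl⟩
  exact ⟨_, hy, by rw [← Equiv.Perm.mul_apply, ← zpow_add, sub_add_cancel]⟩

theorem iSup_eLpNorm_indicator_one_comp {ι : Sort*} {f : ι → X → X} (hf : ∀ i, Measurable (f i))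
    {W : Set X} (hWm : MeasurableSet W) {p : ℝ≥0∞} (hp0 : p ≠ 0) (hpT : p ≠ ⊤) :
    ⨆ i, eLpNorm (W.indicator (fun _ => (1 : ℂ)) ∘ f i) p μ =
      (⨆ i, μ (f i ⁻¹' W)) ^ (1 / p.toReal) := by
  rw [ENNReal.iSup_rpow _ (by simp [toReal_pos hp0 hpT])]
  refine iSup_congr fun i => ?_
  have hcomp : W.indicator (fun _ => (1 : ℂ)) ∘ f i = (f i ⁻¹' W).indicator fun _ => 1 :=
    funext fun _ => (indicator_comp_right (f i)).symm
  rw [hcomp, eLpNorm_indicator_const (hf i hWm) hp0 hpT, enorm_one, one_mul]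

theorem iSup_eLpNorm_comp_eq_top {ι : Sort*} {f : ι → X → X}
    (hf : ∀ i, QuasiMeasurePreserving (f i) μ μ) {p : ℝ≥0∞} (hp0 : p ≠ 0) (hpT : p ≠ ⊤)
    {E : Type*} [NormedAddCommGroup E] {φ : X → E} (hφ : AEStronglyMeasurable φ μ)
    {ε : ℝ≥0∞} (hε0 : ε ≠ 0) (hεT : ε ≠ ⊤) {B : Set X}
    (hφB : ∀ x ∈ B, ε ≤ ‖φ x‖ₑ) (hB : ⨆ i, μ (f i ⁻¹' B) = ⊤) :
    ⨆ i, eLpNorm (φ ∘ f i) p μ = ⊤ := by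
  have hp : 0 < p.toReal := toReal_pos hp0 hpT
  have hεp0 : ε ^ p.toReal ≠ 0 := (rpow_pos (pos_iff_ne_zero.2 hε0) hεT).ne'
  have hεpT : ε ^ p.toReal ≠ ⊤ := rpow_ne_top_of_nonneg hp.le hεT
  have hchebyshev (i : ι) : ε ^ p.toReal * μ (f i ⁻¹' B) ≤ eLpNorm (φ ∘ f i) p μ ^ p.toReal :=
    calc ε ^ p.toReal * μ (f i ⁻¹' B) ≤ ε ^ p.toReal * μ {x | ε ≤ ‖(φ ∘ f i) x‖ₑ} := by
          gcongr
          exact fun x hx => hφB _ hx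
      _ ≤ _ := mul_meas_ge_le_pow_eLpNorm' μ hp0 hpT (hφ.comp_quasiMeasurePreserving (hf i)) ε
  rw [← rpow_eq_top_iff_of_pos hp, ENNReal.iSup_rpow _ hp]
  exact ENNReal.iSup_eq_top_of_le_mul (inv_ne_top.2 hεp0)
    (fun i => (ENNReal.mul_le_iff_le_inv hεp0 hεpT).1 (hchebyshev i)) hB

end

theorem stmt_7_general
    {X : Type*} [MeasurableSpace X] (μ : MeasureTheory.Measure X)
    (p : ℝ≥0∞) (hp1 : 1 ≤ p) (hpT : p ≠ ⊤)
    (e : Equiv.Perm X) (he : Measurable e) (he' : Measurable e.symm)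
    (c c' : ℝ≥0∞)
    (hb : ∀ B : Set X, MeasurableSet B → μ (⇑e ⁻¹' B) ≤ c * μ B)
    (hb' : ∀ B : Set X, MeasurableSet B → μ (⇑e '' B) ≤ c' * μ B)
    (W : Set X) (hWm : MeasurableSet W) (hW0 : 0 < μ W) (hWfin : μ W ≠ ⊤)
    (hcover : (⋃ k : ℤ, ⇑(e ^ k) '' W) = Set.univ)
    (K : ℝ≥0∞) (hK0 : 0 < K) (hKT : K ≠ ⊤)
    (hbd : ∀ (k : ℤ) (B : Set X), MeasurableSet B → B ⊆ W →
        K⁻¹ * (μ (⇑(e ^ k) '' W) * μ B) ≤ μ (⇑(e ^ k) '' B) * μ W ∧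
        μ (⇑(e ^ k) '' B) * μ W ≤ K * (μ (⇑(e ^ k) '' W) * μ B)) :
    (∀ φ : X → ℂ, MemLp φ p μ → ¬ φ =ᵐ[μ] 0 →
        (⨆ n : ℤ, eLpNorm (φ ∘ ⇑(e ^ n)) p μ) = ⊤) ↔
    (⨆ n : ℤ, μ (⇑(e ^ n) '' W)) = ⊤ := by
  have hp0 : p ≠ 0 := (zero_lt_one.trans_le hp1).ne'
  have hQ : e ∈ quasiMeasurePreservingPermSubgroup μ :=
    ⟨.of_measure_preimage_le he hb, .of_measure_preimage_le he' fun B hB => by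
      simpa only [Equiv.image_eq_preimage_symm] using hb' B hB⟩
  have hneg (B : Set X) : ⨆ n : ℤ, μ (⇑(e ^ n) ⁻¹' B) = ⨆ n : ℤ, μ (⇑(e ^ n) '' B) := by
    simp_rw [Equiv.Perm.preimage_zpow]
    exact (Equiv.neg ℤ).iSup_comp (g := fun n => μ (⇑(e ^ n) '' B))
  constructor
  · intro hexp
    have hW_ne : ¬ W.indicator (fun _ => (1 : ℂ)) =ᵐ[μ] 0 := by
      simpa [EventuallyEq, ae_iff, indicator_apply_eq_zero] using hW0.ne'
    have := hexp _ (memLp_indicator_const p hWm 1 (.inr hWfin)) hW_ne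
    rwa [iSup_eLpNorm_indicator_one_comp (fun n => (zpow_mem hQ n).1.measurable) hWm hp0 hpT,
      rpow_eq_top_iff_of_pos (by simp [toReal_pos hp0 hpT]), hneg] at this
  · intro hW φ hφ hφ0
    obtain ⟨ε, hε0, hεT, B, hBm, hB0, hφB⟩ :=
      exists_measurableSet_measure_ne_zero_forall_le hφ.1.enorm (by simpa [EventuallyEq] using hφ0)
    refine iSup_eLpNorm_comp_eq_top (fun n => (zpow_mem hQ n).1) hp0 hpT hφ.1 hε0 hεT hφB ?_
    rw [hneg]
    exact iSup_measure_zpow_image_eq_top hQ hWm hWfin hcover hK0.ne' hKT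
      (fun k B hB hBW => (hbd k B hB hBW).1) hW hBm hB0

/-- Theorem ED(2): for a dissipative composition dynamical system of bounded
distortion generated by `W`, with `T_f` invertible, `T_f` is expansive iff
`sup_{n∈ℤ} μ(fⁿ(W)) = ∞`. -/
theorem stmt_7
    {X : Type*} [MeasurableSpace X] (μ : MeasureTheory.Measure X) [MeasureTheory.SigmaFinite μ]
    (p : ℝ≥0∞) (hp1 : 1 ≤ p) (hpT : p ≠ ⊤)
    (e : Equiv.Perm X) (he : Measurable e) (he' : Measurable e.symm)
    (c c' : ℝ≥0∞) (hc : 0 < c) (hcT : c ≠ ⊤) (hc' : 0 < c') (hc'T : c' ≠ ⊤)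
    (hb : ∀ B : Set X, MeasurableSet B → μ (⇑e ⁻¹' B) ≤ c * μ B)
    (hb' : ∀ B : Set X, MeasurableSet B → μ (⇑e '' B) ≤ c' * μ B)
    (W : Set X) (hWm : MeasurableSet W) (hW0 : 0 < μ W) (hWfin : μ W ≠ ⊤)
    (hcover : (⋃ k : ℤ, ⇑(e ^ k) '' W) = Set.univ)
    (hdisj : Pairwise (fun k l : ℤ => Disjoint (⇑(e ^ k) '' W) (⇑(e ^ l) '' W)))
    (K : ℝ≥0∞) (hK0 : 0 < K) (hKT : K ≠ ⊤)
    (hbd : ∀ (k : ℤ) (B : Set X), MeasurableSet B → B ⊆ W →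
        K⁻¹ * (μ (⇑(e ^ k) '' W) * μ B) ≤ μ (⇑(e ^ k) '' B) * μ W ∧
        μ (⇑(e ^ k) '' B) * μ W ≤ K * (μ (⇑(e ^ k) '' W) * μ B)) :
    (∀ φ : X → ℂ, MemLp φ p μ → ¬ φ =ᵐ[μ] 0 →
        (⨆ n : ℤ, eLpNorm (φ ∘ ⇑(e ^ n)) p μ) = ⊤) ↔
    (⨆ n : ℤ, μ (⇑(e ^ n) '' W)) = ⊤ :=
  stmt_7_general μ p hp1 hpT e he he' c c' hb hb' W hWm hW0 hWfin hcover K hK0 hKT hbd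
end

section
/- Let $(X,\mathcal{B},\mu,f,T_f)$ be a dissipative composition dynamical system of bounded distortion generated by $W$, with $T_f$ invertible. If $\limsup_{n\to\infty}\sup_{k\ge 0}\left(\frac{\mu(f^k(W))}{\mu(f^{k+n}(W))}\right)^{1/n}<1$ and $\liminf_{n\to\infty}\inf_{k\le 0}\left(\frac{\mu(f^{k-n}(W))}{\mu(f^k(W))}\right)^{1/n}>1$, then $T_f$ is not structurally stable, and hence not strongly structurally stable. -/
/-!
If `T` were structurally stable, the constant perturbation `φ ≡ c • 𝟙_W` (with `c ≠ 0` small)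
would give a conjugacy `h`, and `y = h 0` would solve `y = T y + c • 𝟙_W`, i.e.
`y = y ∘ e + c • 𝟙_W` a.e. Since the `e`-images of `W` are disjoint, along the orbit of
`x ∈ W` this says `y (e^k x) = y x` for `k ≤ 0` and `y (e^k x) = y x - c` for `k > 0`.
Split `W` according to whether `‖y‖ ≥ ‖c‖/2`. On the first part the backward orbit, on the second
the forward orbit stays in `{‖y‖ ≥ ‖c‖/2}`, a set of finite measure by Chebyshev. By bounded
distortion, `μ (e^k W)` is then bounded along that half-orbit, whereas the two growth conditions
force `μ (e^n W) → ∞` and `μ (e^{-n} W) → ∞`.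
-/

open MeasureTheory Filter Set ENNReal

/-- Structural stability in the sense of Pugh. -/
def StructurallyStable {E : Type*} [NormedAddCommGroup E]
    [NormedSpace ℂ E] (T : E ≃L[ℂ] E) : Prop :=
  ∃ ε : ℝ, 0 < ε ∧ ∀ φ : E → E, Continuous φ →
    (∀ x, ‖φ x‖ ≤ ε) → LipschitzWith (Real.toNNReal ε) φ →
    ∃ h : E ≃ₜ E, ∀ x, h (T x) = T (h x) + φ (h x)

/-- Strong structural stability. -/
def StronglyStructurallyStable {E : Type*} [NormedAddCommGroup E]
    [NormedSpace ℂ E] (T : E ≃L[ℂ] E) : Prop :=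
  ∀ γ : ℝ, 0 < γ → ∃ ε : ℝ, 0 < ε ∧ ∀ φ : E → E, Continuous φ →
    (∀ x, ‖φ x‖ ≤ ε) → LipschitzWith (Real.toNNReal ε) φ →
    ∃ h : E ≃ₜ E, (∀ x, h (T x) = T (h x) + φ (h x)) ∧ ∀ x, ‖h x - x‖ ≤ γ

open scoped Topology

lemma tendsto_nhds_top_of_one_lt_liminf_rpow {a : ℕ → ℝ≥0∞} {m : ℝ≥0∞} (hm0 : m ≠ 0)
    (hm : m ≠ ⊤) (h : 1 < liminf (fun n : ℕ => (a n / m) ^ (1 / (n : ℝ))) atTop) :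
    Tendsto a atTop (𝓝 ⊤) := by
  obtain ⟨s, hs1, hs⟩ := exists_between h
  have hpow : Tendsto (fun n : ℕ => s ^ n * m) atTop (𝓝 ⊤) := by
    simpa [ENNReal.top_mul hm0] using ENNReal.Tendsto.mul_const (b := m)
      (ENNReal.tendsto_pow_atTop_nhds_top_iff.2 hs1) (Or.inl top_ne_zero)
  refine tendsto_nhds_top_mono hpow ?_
  filter_upwards [eventually_lt_of_lt_liminf hs, eventually_gt_atTop 0] with n hsn hn
  rw [one_div] at hsn
  rw [← ENNReal.le_div_iff_mul_le (Or.inl hm0) (Or.inl hm), ← ENNReal.rpow_natCast,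
    ← ENNReal.le_rpow_inv_iff (by positivity)]
  exact hsn.le

lemma tendsto_nhds_top_of_limsup_rpow_lt_one {a : ℕ → ℝ≥0∞} {m : ℝ≥0∞} (hm0 : m ≠ 0)
    (hm : m ≠ ⊤) (h : limsup (fun n : ℕ => (m / a n) ^ (1 / (n : ℝ))) atTop < 1) :
    Tendsto a atTop (𝓝 ⊤) := by
  refine tendsto_nhds_top_of_one_lt_liminf_rpow hm0 hm ?_
  have hinv : ∀ n : ℕ, (a n / m) ^ (1 / (n : ℝ)) = ((m / a n) ^ (1 / (n : ℝ)))⁻¹ := fun n => by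
    rw [← ENNReal.inv_rpow, ENNReal.inv_div (Or.inr hm) (Or.inr hm0)]
  simp_rw [hinv, ← ENNReal.inv_limsup]
  exact ENNReal.one_lt_inv.2 h

lemma quasiMeasurePreserving_of_measure_preimage_le {X Y : Type*} [MeasurableSpace X]
    [MeasurableSpace Y] {μ : Measure X} {ν : Measure Y} {f : X → Y} (hf : Measurable f)
    {c : ℝ≥0∞} (h : ∀ s, MeasurableSet s → μ (f ⁻¹' s) ≤ c * ν s) :
    Measure.QuasiMeasurePreserving f μ ν :=
  ⟨hf, Measure.absolutelyContinuous_of_le_smul <| Measure.le_iff.2 fun s hs => by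
    simpa [Measure.map_apply hf hs] using h s hs⟩

lemma Equiv.Perm.quasiMeasurePreserving_zpow_s16 {X : Type*} [MeasurableSpace X] {μ : Measure X}
    {e : Equiv.Perm X} (h : Measure.QuasiMeasurePreserving e μ μ)
    (h' : Measure.QuasiMeasurePreserving e.symm μ μ) :
    ∀ k : ℤ, Measure.QuasiMeasurePreserving ⇑(e ^ k) μ μ
  | (n : ℕ) => by simpa [Equiv.Perm.coe_pow] using h.iterate n
  | .negSucc n => by simpa [zpow_negSucc, ← inv_pow, Equiv.Perm.coe_pow] using h'.iterate (n + 1)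

section
variable {G : Type*} [AddCommGroup G] {a b : ℤ → G}

lemma apply_eq_apply_zero_of_nonpos (h : ∀ k, a k = a (k + 1) + b k) (hb : ∀ k ≠ 0, b k = 0)
    {k : ℤ} (hk : k ≤ 0) : a k = a 0 := by
  induction k, hk using Int.leInductionDown with
  | base => rfl
  | pred k hk ih => rw [h (k - 1), hb _ (by omega), sub_add_cancel, add_zero, ih]

lemma apply_eq_apply_zero_sub_of_pos (h : ∀ k, a k = a (k + 1) + b k) (hb : ∀ k ≠ 0, b k = 0)
    {k : ℤ} (hk : 0 < k) : a k = a 0 - b 0 := by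
  induction k, (show 1 ≤ k from hk) using Int.leInduction with
  | base => rw [h 0, zero_add, add_sub_cancel_right]
  | succ k hk ih => rw [← ih (by omega), h k, hb k (by omega), add_zero]
end

lemma zpow_apply_mem_iff_eq_zero {X : Type*} {e : Equiv.Perm X} {W : Set X}
    (hdisj : Pairwise fun k l : ℤ => Disjoint (⇑(e ^ k) '' W) (⇑(e ^ l) '' W))
    {x : X} (hx : x ∈ W) {k : ℤ} : (e ^ k) x ∈ W ↔ k = 0 := by
  refine ⟨fun hk => by_contra fun hk0 => ?_, by rintro rfl; simpa using hx⟩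
  exact disjoint_left.1 (hdisj hk0 : Disjoint _ (⇑(e ^ (0 : ℤ)) '' W))
    (mem_image_of_mem _ hx) (by simpa using hk)

section Dissipative

variable {X : Type*} [MeasurableSpace X] {μ : Measure X} {e : Equiv.Perm X} {W : Set X}

lemma ae_forall_zpow_apply_eq_add {E : Type*} [Add E]
    (hqmp : ∀ k : ℤ, Measure.QuasiMeasurePreserving ⇑(e ^ k) μ μ) {ψ g : X → E}
    (h : ∀ᵐ x ∂μ, ψ x = ψ (e x) + g x) :
    ∀ᵐ x ∂μ, ∀ k : ℤ, ψ ((e ^ k) x) = ψ ((e ^ (k + 1)) x) + g ((e ^ k) x) := by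
  refine ae_all_iff.2 fun k => ((hqmp k).ae h).mono fun x hx => ?_
  rwa [← mul_self_zpow, Equiv.Perm.mul_apply]

lemma Equiv.Perm.image_ae_le {f : Equiv.Perm X}
    (hf : Measure.QuasiMeasurePreserving ⇑f⁻¹ μ μ) {B F : Set X}
    (h : ∀ᵐ x ∂μ, x ∈ B → f x ∈ F) : ⇑f '' B ≤ᵐ[μ] F := by
  filter_upwards [hf.ae h] with z hz (hzB : z ∈ ⇑f '' B)
  show z ∈ F
  rw [Equiv.image_eq_preimage_symm] at hzB
  simpa using hz hzB

lemma not_tendsto_measure_zpow_image_nhds_top (hWfin : μ W ≠ ⊤) {K : ℝ≥0∞} (hK0 : K ≠ 0)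
    (hKT : K ≠ ⊤)
    (hbd : ∀ (k : ℤ) (B : Set X), MeasurableSet B → B ⊆ W →
      K⁻¹ * (μ (⇑(e ^ k) '' W) * μ B) ≤ μ (⇑(e ^ k) '' B) * μ W)
    (hqmp : ∀ k : ℤ, Measure.QuasiMeasurePreserving ⇑(e ^ k) μ μ)
    {B F : Set X} (hBm : MeasurableSet B) (hBW : B ⊆ W) (hB : μ B ≠ 0) (hF : μ F ≠ ⊤)
    {k : ℕ → ℤ} (hk : ∀ᶠ n in atTop, ∀ᵐ x ∂μ, x ∈ B → (e ^ k n) x ∈ F) :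
    ¬ Tendsto (fun n => μ (⇑(e ^ k n) '' W)) atTop (𝓝 ⊤) := by
  intro htop
  have hfin : K * (μ F * μ W) ≠ ⊤ := ENNReal.mul_ne_top hKT (ENNReal.mul_ne_top hF hWfin)
  have hD : K * (μ F * μ W) / μ B ≠ ⊤ := (ENNReal.div_lt_top hfin hB).ne
  obtain ⟨n, hn, hDn⟩ := (hk.and (htop.eventually (lt_mem_nhds (lt_top_iff_ne_top.2 hD)))).exists
  have hBF : μ (⇑(e ^ k n) '' B) ≤ μ F := by
    refine measure_mono_ae (Equiv.Perm.image_ae_le ?_ hn)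
    simpa [← zpow_neg] using hqmp (-k n)
  refine hDn.not_ge <| ENNReal.le_div_iff_mul_le (Or.inl hB) (Or.inr hfin) |>.2 ?_
  calc μ (⇑(e ^ k n) '' W) * μ B ≤ K * (μ (⇑(e ^ k n) '' B) * μ W) :=
        (ENNReal.inv_mul_le_iff hK0 hKT).1 (hbd _ B hBm hBW)
    _ ≤ K * (μ F * μ W) := by gcongr


lemma tendsto_measure_zpow_natCast_image_nhds_top (hW0 : μ W ≠ 0) (hWfin : μ W ≠ ⊤)
    (h : limsup (fun n : ℕ => ⨆ k ∈ Ici (0 : ℤ),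
      (μ (⇑(e ^ k) '' W) / μ (⇑(e ^ (k + (n : ℤ))) '' W)) ^ (1 / (n : ℝ))) atTop < 1) :
    Tendsto (fun n : ℕ => μ (⇑(e ^ (n : ℤ)) '' W)) atTop (𝓝 ⊤) := by
  refine tendsto_nhds_top_of_limsup_rpow_lt_one hW0 hWfin
    (lt_of_le_of_lt (limsup_le_limsup (Eventually.of_forall fun n => ?_)) h)
  simpa using le_biSup (fun k : ℤ => (μ (⇑(e ^ k) '' W) / μ (⇑(e ^ (k + (n : ℤ))) '' W)) ^
    (1 / (n : ℝ))) (self_mem_Ici : (0 : ℤ) ∈ Ici 0)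

lemma tendsto_measure_zpow_neg_natCast_image_nhds_top (hW0 : μ W ≠ 0) (hWfin : μ W ≠ ⊤)
    (h : 1 < liminf (fun n : ℕ => ⨅ k ∈ Iic (0 : ℤ),
      (μ (⇑(e ^ (k - (n : ℤ))) '' W) / μ (⇑(e ^ k) '' W)) ^ (1 / (n : ℝ))) atTop) :
    Tendsto (fun n : ℕ => μ (⇑(e ^ (-(n : ℤ))) '' W)) atTop (𝓝 ⊤) := by
  refine tendsto_nhds_top_of_one_lt_liminf_rpow hW0 hWfin
    (lt_of_lt_of_le h (liminf_le_liminf (Eventually.of_forall fun n => ?_)))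
  simpa using biInf_le (fun k : ℤ => (μ (⇑(e ^ (k - (n : ℤ))) '' W) / μ (⇑(e ^ k) '' W)) ^
    (1 / (n : ℝ))) (self_mem_Iic : (0 : ℤ) ∈ Iic 0)

end Dissipative

lemma StructurallyStable.exists_add_eq_of_norm_le {E : Type*} [NormedAddCommGroup E]
    [NormedSpace ℂ E] {T : E ≃L[ℂ] E} (hT : StructurallyStable T) :
    ∃ ε > 0, ∀ v : E, ‖v‖ ≤ ε → ∃ y, T y + v = y := by
  obtain ⟨ε, hε, hst⟩ := hT
  refine ⟨ε, hε, fun v hv => ?_⟩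
  obtain ⟨h, hh⟩ := hst (fun _ => v) continuous_const (fun _ => hv)
    ((LipschitzWith.const v).weaken zero_le)
  exact ⟨h 0, by simpa using (hh 0).symm⟩

lemma StronglyStructurallyStable.structurallyStable {E : Type*} [NormedAddCommGroup E]
    [NormedSpace ℂ E] {T : E ≃L[ℂ] E} (hT : StronglyStructurallyStable T) :
    StructurallyStable T := by
  obtain ⟨ε, hε, hst⟩ := hT 1 one_pos
  exact ⟨ε, hε, fun φ hφ hφε hφL => (hst φ hφ hφε hφL).imp fun _ hh => hh.1⟩

lemma exists_ne_zero_norm_smul_le {𝕜 E : Type*} [NontriviallyNormedField 𝕜]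
    [NormedAddCommGroup E] [NormedSpace 𝕜 E] (v : E) {ε : ℝ} (hε : 0 < ε) :
    ∃ c : 𝕜, c ≠ 0 ∧ ‖c • v‖ ≤ ε := by
  have hlim : Tendsto (fun c : 𝕜 => ‖c • v‖) (𝓝[≠] 0) (𝓝 0) := by
    simpa using (((tendsto_id (x := 𝓝 (0 : 𝕜))).smul_const v).mono_left nhdsWithin_le_nhds).norm
  obtain ⟨c, hcε, hc⟩ := ((hlim.eventually (ge_mem_nhds hε)).and self_mem_nhdsWithin).exists
  exact ⟨c, hc, hcε⟩

section Lp

variable {X : Type*} [MeasurableSpace X] {μ : Measure X} {p : ℝ≥0∞} {e : Equiv.Perm X}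
  {W : Set X}

lemma ae_eq_comp_add_indicator {T : Lp ℂ p μ → Lp ℂ p μ}
    (hT : ∀ φ : Lp ℂ p μ, (T φ : X → ℂ) =ᵐ[μ] fun x => φ (e x))
    (hWm : MeasurableSet W) (hWfin : μ W ≠ ⊤) {c : ℂ} {y : Lp ℂ p μ}
    (hy : T y + c • indicatorConstLp p hWm hWfin (1 : ℂ) = y) :
    ∀ᵐ x ∂μ, y x = y (e x) + W.indicator (fun _ => c) x := by
  nth_rewrite 1 [← hy]
  filter_upwards [Lp.coeFn_add (T y) (c • indicatorConstLp p hWm hWfin (1 : ℂ)),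
    Lp.coeFn_smul c (indicatorConstLp p hWm hWfin (1 : ℂ)),
    indicatorConstLp_coeFn (hs := hWm) (hμs := hWfin) (c := (1 : ℂ)), hT y]
    with x hadd hsmul hind hTx
  rw [hadd, Pi.add_apply, hsmul, Pi.smul_apply, hind, hTx]
  by_cases hx : x ∈ W <;> simp [hx]

lemma add_smul_indicatorConstLp_ne (hp0 : p ≠ 0) (hp : p ≠ ⊤) {T : Lp ℂ p μ → Lp ℂ p μ}
    (hT : ∀ φ : Lp ℂ p μ, (T φ : X → ℂ) =ᵐ[μ] fun x => φ (e x))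
    (hWm : MeasurableSet W) (hW0 : μ W ≠ 0) (hWfin : μ W ≠ ⊤)
    (hdisj : Pairwise fun k l : ℤ => Disjoint (⇑(e ^ k) '' W) (⇑(e ^ l) '' W))
    {K : ℝ≥0∞} (hK0 : K ≠ 0) (hKT : K ≠ ⊤)
    (hbd : ∀ (k : ℤ) (B : Set X), MeasurableSet B → B ⊆ W →
      K⁻¹ * (μ (⇑(e ^ k) '' W) * μ B) ≤ μ (⇑(e ^ k) '' B) * μ W)
    (hqmp : ∀ k : ℤ, Measure.QuasiMeasurePreserving ⇑(e ^ k) μ μ)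
    (hfwd : Tendsto (fun n : ℕ => μ (⇑(e ^ (n : ℤ)) '' W)) atTop (𝓝 ⊤))
    (hbwd : Tendsto (fun n : ℕ => μ (⇑(e ^ (-(n : ℤ))) '' W)) atTop (𝓝 ⊤))
    {c : ℂ} (hc : c ≠ 0) (y : Lp ℂ p μ) :
    T y + c • indicatorConstLp p hWm hWfin (1 : ℂ) ≠ y := by
  intro hy
  have horbit := ae_forall_zpow_apply_eq_add hqmp (ae_eq_comp_add_indicator hT hWm hWfin hy)
  have hjump : ∀ x ∈ W, ∀ k : ℤ, k ≠ 0 → W.indicator (fun _ => c) ((e ^ k) x) = 0 :=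
    fun x hx k hk => indicator_of_notMem ((zpow_apply_mem_iff_eq_zero hdisj hx).not.2 hk) _
  have hback : ∀ᵐ x ∂μ, x ∈ W → ∀ k : ℤ, k ≤ 0 → y ((e ^ k) x) = y x :=
    horbit.mono fun x hx hxW k hk => by
      simpa using apply_eq_apply_zero_of_nonpos (a := fun k => y ((e ^ k) x)) hx (hjump x hxW) hk
  have hforth : ∀ᵐ x ∂μ, x ∈ W → ∀ k : ℤ, 0 < k → y ((e ^ k) x) = y x - c :=
    horbit.mono fun x hx hxW k hk => by
      simpa [hxW] using
        apply_eq_apply_zero_sub_of_pos (a := fun k => y ((e ^ k) x)) hx (hjump x hxW) hk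
  set δ : NNReal := ‖c‖₊ / 2
  set F := {x | δ ≤ ‖y x‖₊}
  have hF : μ F ≠ ⊤ := ((Lp.memLp y).meas_ge_lt_top hp0 hp
    (div_ne_zero (nnnorm_ne_zero_iff.2 hc) two_ne_zero)).ne
  have hFm : MeasurableSet F :=
    measurableSet_le measurable_const (Lp.stronglyMeasurable y).measurable.nnnorm
  have hsplit : μ (W ∩ F) ≠ 0 ∨ μ (W \ F) ≠ 0 := by
    by_contra! h
    exact hW0 (by rw [← measure_inter_add_sdiff W hFm, h.1, h.2, add_zero])
  rcases hsplit with hB | hB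
  · refine not_tendsto_measure_zpow_image_nhds_top hWfin hK0 hKT hbd hqmp (hWm.inter hFm)
      inter_subset_left hB hF (k := fun n => -n) (Eventually.of_forall fun n => ?_) hbwd
    filter_upwards [hback] with x hx hxB
    show δ ≤ ‖y ((e ^ (-(n : ℤ))) x)‖₊
    rw [hx hxB.1 _ (by omega)]
    exact hxB.2
  · refine not_tendsto_measure_zpow_image_nhds_top hWfin hK0 hKT hbd hqmp (hWm.diff hFm)
      sdiff_subset hB hF (k := fun n => n) ?_ hfwd
    filter_upwards [eventually_gt_atTop 0] with n hn
    filter_upwards [hforth] with x hx hxB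
    have hlt : ‖y x‖ < ‖c‖ / 2 := by simpa [F, δ, ← NNReal.coe_lt_coe] using hxB.2
    show δ ≤ ‖y ((e ^ (n : ℤ)) x)‖₊
    rw [hx hxB.1 _ (by omega), ← NNReal.coe_le_coe, coe_nnnorm]
    have := norm_sub_norm_le c (y x)
    rw [norm_sub_rev] at this
    simp only [δ, NNReal.coe_div, coe_nnnorm, NNReal.coe_ofNat]
    linarith

end Lp

theorem stmt_16_general
    {X : Type*} [MeasurableSpace X] (μ : MeasureTheory.Measure X)
    (p : ℝ≥0∞) (hpT : p ≠ ⊤)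
    (e : Equiv.Perm X) (he : Measurable e) (he' : Measurable e.symm)
    (c c' : ℝ≥0∞)
    (hb : ∀ B : Set X, MeasurableSet B → μ (⇑e ⁻¹' B) ≤ c * μ B)
    (hb' : ∀ B : Set X, MeasurableSet B → μ (⇑e '' B) ≤ c' * μ B)
    (W : Set X) (hWm : MeasurableSet W) (hW0 : 0 < μ W) (hWfin : μ W ≠ ⊤)
    (hdisj : Pairwise (fun k l : ℤ => Disjoint (⇑(e ^ k) '' W) (⇑(e ^ l) '' W)))
    (K : ℝ≥0∞) (hK0 : 0 < K) (hKT : K ≠ ⊤)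
    (hbd : ∀ (k : ℤ) (B : Set X), MeasurableSet B → B ⊆ W →
        K⁻¹ * (μ (⇑(e ^ k) '' W) * μ B) ≤ μ (⇑(e ^ k) '' B) * μ W ∧
        μ (⇑(e ^ k) '' B) * μ W ≤ K * (μ (⇑(e ^ k) '' W) * μ B))
    [Fact (1 ≤ p)]
    (T : MeasureTheory.Lp ℂ p μ ≃L[ℂ] MeasureTheory.Lp ℂ p μ)
    (hT : ∀ φ : MeasureTheory.Lp ℂ p μ, (T φ : X → ℂ) =ᵐ[μ] fun x => φ (e x))
    (h1 : Filter.limsup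
        (fun n : ℕ => ⨆ k ∈ Set.Ici (0 : ℤ),
          (μ (⇑(e ^ k) '' W) / μ (⇑(e ^ (k + (n : ℤ))) '' W)) ^ (1 / (n : ℝ)))
        Filter.atTop < 1)
    (h2 : 1 < Filter.liminf
        (fun n : ℕ => ⨅ k ∈ Set.Iic (0 : ℤ),
          (μ (⇑(e ^ (k - (n : ℤ))) '' W) / μ (⇑(e ^ k) '' W)) ^ (1 / (n : ℝ)))
        Filter.atTop) :
    ¬ StructurallyStable T ∧ ¬ StronglyStructurallyStable T := by
  have hqmp : ∀ k : ℤ, Measure.QuasiMeasurePreserving ⇑(e ^ k) μ μ :=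
    Equiv.Perm.quasiMeasurePreserving_zpow_s16 (quasiMeasurePreserving_of_measure_preimage_le he hb)
      (quasiMeasurePreserving_of_measure_preimage_le he' fun B hB => by
        simpa [Equiv.image_eq_preimage_symm] using hb' B hB)
  have hSS : ¬ StructurallyStable T := by
    intro hSS
    obtain ⟨ε, hε, hfix⟩ := hSS.exists_add_eq_of_norm_le
    obtain ⟨a, ha, haε⟩ :=
      exists_ne_zero_norm_smul_le (𝕜 := ℂ) (indicatorConstLp p hWm hWfin (1 : ℂ)) hε
    obtain ⟨y, hy⟩ := hfix _ haε
    exact add_smul_indicatorConstLp_ne (zero_lt_one.trans_le Fact.out).ne' hpT hT hWm hW0.ne'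
      hWfin hdisj hK0.ne' hKT (fun k B hB hBW => (hbd k B hB hBW).1) hqmp
      (tendsto_measure_zpow_natCast_image_nhds_top hW0.ne' hWfin h1)
      (tendsto_measure_zpow_neg_natCast_image_nhds_top hW0.ne' hWfin h2) ha y hy
  exact ⟨hSS, fun h => hSS h.structurallyStable⟩

/-- Proposition 4.1: under the displayed conditions, `T_f` is not structurally
stable, and hence not strongly structurally stable. -/
theorem stmt_16
    {X : Type*} [MeasurableSpace X] (μ : MeasureTheory.Measure X) [MeasureTheory.SigmaFinite μ]
    (p : ℝ≥0∞) (hp1 : 1 ≤ p) (hpT : p ≠ ⊤)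
    (e : Equiv.Perm X) (he : Measurable e) (he' : Measurable e.symm)
    (c c' : ℝ≥0∞) (hc : 0 < c) (hcT : c ≠ ⊤) (hc' : 0 < c') (hc'T : c' ≠ ⊤)
    (hb : ∀ B : Set X, MeasurableSet B → μ (⇑e ⁻¹' B) ≤ c * μ B)
    (hb' : ∀ B : Set X, MeasurableSet B → μ (⇑e '' B) ≤ c' * μ B)
    (W : Set X) (hWm : MeasurableSet W) (hW0 : 0 < μ W) (hWfin : μ W ≠ ⊤)
    (hcover : (⋃ k : ℤ, ⇑(e ^ k) '' W) = Set.univ)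
    (hdisj : Pairwise (fun k l : ℤ => Disjoint (⇑(e ^ k) '' W) (⇑(e ^ l) '' W)))
    (K : ℝ≥0∞) (hK0 : 0 < K) (hKT : K ≠ ⊤)
    (hbd : ∀ (k : ℤ) (B : Set X), MeasurableSet B → B ⊆ W →
        K⁻¹ * (μ (⇑(e ^ k) '' W) * μ B) ≤ μ (⇑(e ^ k) '' B) * μ W ∧
        μ (⇑(e ^ k) '' B) * μ W ≤ K * (μ (⇑(e ^ k) '' W) * μ B))
    [Fact (1 ≤ p)]
    (T : MeasureTheory.Lp ℂ p μ ≃L[ℂ] MeasureTheory.Lp ℂ p μ)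
    (hT : ∀ φ : MeasureTheory.Lp ℂ p μ, (T φ : X → ℂ) =ᵐ[μ] fun x => φ (e x))
    (h1 : Filter.limsup
        (fun n : ℕ => ⨆ k ∈ Set.Ici (0 : ℤ),
          (μ (⇑(e ^ k) '' W) / μ (⇑(e ^ (k + (n : ℤ))) '' W)) ^ (1 / (n : ℝ)))
        Filter.atTop < 1)
    (h2 : 1 < Filter.liminf
        (fun n : ℕ => ⨅ k ∈ Set.Iic (0 : ℤ),
          (μ (⇑(e ^ (k - (n : ℤ))) '' W) / μ (⇑(e ^ k) '' W)) ^ (1 / (n : ℝ)))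
        Filter.atTop) :
    ¬ StructurallyStable T ∧ ¬ StronglyStructurallyStable T :=
  stmt_16_general μ p hpT e he he' c c' hb hb' W hWm hW0 hWfin hdisj K hK0 hKT hbd T hT h1 h2
end

section
/- Let $(X,\mathcal{B},\mu,f)$ be a dissipative system of bounded distortion generated by $W$ with distortion constant $H$ as in the two-sided distortion inequality over all translates. Then for every measurable $B$ with $0<\mu(B)<\infty$ and every $n\in\mathbb{Z}$: $\mu(f^n(B))\ge\frac{1}{H}\mu(B)\inf_{k\in\mathbb{Z}}\frac{\mu(f^{k+n}(W))}{\mu(f^k(W))}$, where $B=\dot{\bigcup}_{k\in\mathbb{Z}}(B\cap f^k(W))$. -/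
/-!
Cut `B` along the tower `X = ⋃ₖ fᵏ(W)`. The piece `B ∩ fᵏ(W)` is `fᵏ(C)` with `C ⊆ W`, and
its image under `fⁿ` is `f^(n+k)(C)`, so the distortion bound with `s = k`, `t = n` compares
the two measures up to the ratio `μ(f^(k+n)(W)) / μ(fᵏ(W))`, which dominates the infimum.
Pieces with `μ(C) = 0` are null by non-singularity, and countable additivity sums the
piecewise inequalities.
-/

open MeasureTheory Set ENNReal

theorem MeasureTheory.mul_measure_le_of_forall_mul_measure_inter_le {X ι : Type*}
    [MeasurableSpace X] [Countable ι] {μ ν : Measure X} {P : ι → Set X}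
    (hPm : ∀ i, MeasurableSet (P i))
    (hPd : Pairwise (fun i j => Disjoint (P i) (P j)))
    (hPc : ⋃ i, P i = univ) {B : Set X} (hB : MeasurableSet B) (c : ℝ≥0∞)
    (h : ∀ i, c * μ (B ∩ P i) ≤ ν (B ∩ P i)) :
    c * μ B ≤ ν B := by
  have hSum : ∀ ρ : Measure X, ρ B = ∑' i, ρ (B ∩ P i) := fun ρ => by
    conv_lhs => rw [← inter_univ B, ← hPc, inter_iUnion]
    exact measure_iUnion (fun i j hij => (hPd hij).mono inter_subset_right inter_subset_right)
      fun i => hB.inter (hPm i)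
  rw [hSum μ, hSum ν, ← ENNReal.tsum_mul_left]
  exact ENNReal.tsum_le_tsum h

namespace Equiv.Perm

theorem image_zpow_eq_preimage_zpow_neg {X : Type*} (e : Perm X) (k : ℤ) (S : Set X) :
    ⇑(e ^ k) '' S = ⇑(e ^ (-k)) ⁻¹' S := by
  rw [Equiv.image_eq_preimage_symm, zpow_neg, inv_def]

variable {X : Type*} [MeasurableSpace X] {μ : Measure X} {e : Perm X}

theorem quasiMeasurePreserving_of_measure_preimage_eq_zero_iff (he : Measurable e)
    (hns : ∀ B : Set X, MeasurableSet B → (μ (⇑e ⁻¹' B) = 0 ↔ μ B = 0)) :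
    Measure.QuasiMeasurePreserving e μ μ :=
  ⟨he, .mk fun B hB hB0 => by rwa [Measure.map_apply he hB, hns B hB]⟩

theorem quasiMeasurePreserving_symm_of_measure_preimage_eq_zero_iff
    (he' : Measurable e.symm)
    (hns : ∀ B : Set X, MeasurableSet B → (μ (⇑e ⁻¹' B) = 0 ↔ μ B = 0)) :
    Measure.QuasiMeasurePreserving e.symm μ μ := by
  refine ⟨he', .mk fun B hB hB0 => ?_⟩
  have hImage : MeasurableSet (e '' B) := by
    rw [Equiv.image_eq_preimage_symm]; exact he' hB
  rw [Measure.map_apply he' hB, ← Equiv.image_eq_preimage_symm, ← hns _ hImage,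
    Equiv.preimage_image]
  exact hB0

theorem quasiMeasurePreserving_zpow_s18 (h : Measure.QuasiMeasurePreserving e μ μ)
    (h' : Measure.QuasiMeasurePreserving e.symm μ μ) (k : ℤ) :
    Measure.QuasiMeasurePreserving ⇑(e ^ k) μ μ :=
  zpow_induction_right (P := fun g : Perm X => Measure.QuasiMeasurePreserving g μ μ)
    (Measure.QuasiMeasurePreserving.id μ) (fun _ ha => ha.comp h) (fun _ ha => ha.comp h')
    k

theorem inv_mul_measure_mul_ratio_le_measure_image
    (hqmp : ∀ k : ℤ, Measure.QuasiMeasurePreserving ⇑(e ^ k) μ μ) {W : Set X} {H : ℝ≥0∞}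
    (hbd : ∀ B : Set X, MeasurableSet B → B ⊆ W → 0 < μ B → ∀ s t : ℤ,
        H⁻¹ * (μ (⇑(e ^ (t + s)) '' W) / μ (⇑(e ^ s) '' W))
          ≤ μ (⇑(e ^ (t + s)) '' B) / μ (⇑(e ^ s) '' B))
    {k : ℤ} {S : Set X} (hSm : MeasurableSet S) (hSW : S ⊆ ⇑(e ^ k) '' W) (n : ℤ) :
    H⁻¹ * μ S * (μ (⇑(e ^ (k + n)) '' W) / μ (⇑(e ^ k) '' W)) ≤ μ (⇑(e ^ n) '' S) := by
  set C := ⇑(e ^ k) ⁻¹' S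
  have hCm : MeasurableSet C := (hqmp k).measurable hSm
  have hCW : C ⊆ W := by
    simpa only [C, Equiv.preimage_image] using preimage_mono (f := ⇑(e ^ k)) hSW
  have hImage : ⇑(e ^ k) '' C = S := image_preimage_eq S (Equiv.surjective _)
  rcases eq_zero_or_pos (μ C) with hC0 | hC0
  · have hS0 : μ S = 0 := by
      rw [← hImage, image_zpow_eq_preimage_zpow_neg]
      exact (hqmp (-k)).preimage_null hC0
    simp [hS0]
  · have hRatio := hbd C hCm hCW hC0 k n
    have hShift : ⇑(e ^ (n + k)) '' C = ⇑(e ^ n) '' S := by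
      rw [zpow_add, coe_mul, image_comp, hImage]
    rw [hShift, hImage, add_comm n k] at hRatio
    calc H⁻¹ * μ S * (μ (⇑(e ^ (k + n)) '' W) / μ (⇑(e ^ k) '' W))
        = H⁻¹ * (μ (⇑(e ^ (k + n)) '' W) / μ (⇑(e ^ k) '' W)) * μ S :=
          mul_right_comm _ _ _
      _ ≤ μ (⇑(e ^ n) '' S) := ENNReal.mul_le_of_le_div hRatio

end Equiv.Perm

open Equiv.Perm

theorem stmt_18_general
    {X : Type*} [MeasurableSpace X] (μ : Measure X)
    (e : Equiv.Perm X) (he : Measurable e) (he' : Measurable e.symm)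
    (hns : ∀ B : Set X, MeasurableSet B → (μ (⇑e ⁻¹' B) = 0 ↔ μ B = 0))
    (W : Set X) (hWm : MeasurableSet W)
    (hcover : (⋃ k : ℤ, ⇑(e ^ k) '' W) = Set.univ)
    (hdisj : Pairwise (fun k l : ℤ => Disjoint (⇑(e ^ k) '' W) (⇑(e ^ l) '' W)))
    (H : ℝ≥0∞)
    (hbd : ∀ (B : Set X), MeasurableSet B → B ⊆ W → 0 < μ B → ∀ s t : ℤ,
        H⁻¹ * (μ (⇑(e ^ (t + s)) '' W) / μ (⇑(e ^ s) '' W))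
            ≤ μ (⇑(e ^ (t + s)) '' B) / μ (⇑(e ^ s) '' B) ∧
        μ (⇑(e ^ (t + s)) '' B) / μ (⇑(e ^ s) '' B)
            ≤ H * (μ (⇑(e ^ (t + s)) '' W) / μ (⇑(e ^ s) '' W))) :
    ∀ (B : Set X), MeasurableSet B → 0 < μ B → μ B ≠ ⊤ → ∀ n : ℤ,
      H⁻¹ * μ B * (⨅ k : ℤ, μ (⇑(e ^ (k + n)) '' W) / μ (⇑(e ^ k) '' W))
        ≤ μ (⇑(e ^ n) '' B) := by
  intro B hBm _ _ n
  have hqmp := quasiMeasurePreserving_zpow_s18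
    (quasiMeasurePreserving_of_measure_preimage_eq_zero_iff he hns)
    (quasiMeasurePreserving_symm_of_measure_preimage_eq_zero_iff he' hns)
  have hmeasImage :
      ∀ (k : ℤ) (S : Set X), MeasurableSet S → MeasurableSet (⇑(e ^ k) '' S) :=
    fun k S hS => by rw [image_zpow_eq_preimage_zpow_neg]; exact (hqmp (-k)).measurable hS
  have hcomap : ∀ S, MeasurableSet S → μ.comap ⇑(e ^ n) S = μ (⇑(e ^ n) '' S) :=
    fun S => Measure.comap_apply _ (Equiv.injective _) (hmeasImage n) μ
  have hpiece : ∀ k : ℤ, MeasurableSet (B ∩ ⇑(e ^ k) '' W) :=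
    fun k => hBm.inter (hmeasImage k W hWm)
  rw [mul_right_comm, ← hcomap B hBm]
  refine mul_measure_le_of_forall_mul_measure_inter_le (fun k => hmeasImage k W hWm) hdisj
    hcover hBm _ fun k => ?_
  rw [hcomap _ (hpiece k), mul_right_comm]
  calc H⁻¹ * μ (B ∩ ⇑(e ^ k) '' W) * ⨅ k, μ (⇑(e ^ (k + n)) '' W) / μ (⇑(e ^ k) '' W)
      ≤ H⁻¹ * μ (B ∩ ⇑(e ^ k) '' W) * (μ (⇑(e ^ (k + n)) '' W) / μ (⇑(e ^ k) '' W)) := by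
        gcongr; exact iInf_le _ k
    _ ≤ μ (⇑(e ^ n) '' (B ∩ ⇑(e ^ k) '' W)) :=
        inv_mul_measure_mul_ratio_le_measure_image hqmp
          (fun C hC hCW hC0 s t => (hbd C hC hCW hC0 s t).1) (hpiece k) inter_subset_right n

/-- In a dissipative system of bounded distortion generated by `W`, with
distortion constant `H` over all translates, every measurable `B` with
`0 < μ(B) < ∞` satisfies
`μ(fⁿ(B)) ≥ H⁻¹ μ(B) · inf_{k∈ℤ} μ(f^{k+n}(W))/μ(f^k(W))` for every `n ∈ ℤ`. -/
theorem stmt_18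
    {X : Type*} [MeasurableSpace X] (μ : Measure X) [SigmaFinite μ]
    (e : Equiv.Perm X) (he : Measurable e) (he' : Measurable e.symm)
    (hns : ∀ B : Set X, MeasurableSet B → (μ (⇑e ⁻¹' B) = 0 ↔ μ B = 0))
    (W : Set X) (hWm : MeasurableSet W) (hW0 : 0 < μ W) (hWfin : μ W ≠ ⊤)
    (hcover : (⋃ k : ℤ, ⇑(e ^ k) '' W) = Set.univ)
    (hdisj : Pairwise (fun k l : ℤ => Disjoint (⇑(e ^ k) '' W) (⇑(e ^ l) '' W)))
    (H : ℝ≥0∞) (hH0 : 0 < H) (hHT : H ≠ ⊤)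
    (hbd : ∀ (B : Set X), MeasurableSet B → B ⊆ W → 0 < μ B → ∀ s t : ℤ,
        H⁻¹ * (μ (⇑(e ^ (t + s)) '' W) / μ (⇑(e ^ s) '' W))
            ≤ μ (⇑(e ^ (t + s)) '' B) / μ (⇑(e ^ s) '' B) ∧
        μ (⇑(e ^ (t + s)) '' B) / μ (⇑(e ^ s) '' B)
            ≤ H * (μ (⇑(e ^ (t + s)) '' W) / μ (⇑(e ^ s) '' W))) :
    ∀ (B : Set X), MeasurableSet B → 0 < μ B → μ B ≠ ⊤ → ∀ n : ℤ,
      H⁻¹ * μ B * (⨅ k : ℤ, μ (⇑(e ^ (k + n)) '' W) / μ (⇑(e ^ k) '' W))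
        ≤ μ (⇑(e ^ n) '' B) :=
  stmt_18_general μ e he he' hns W hWm hcover hdisj H hbd
end
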